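/- arXiv:1905.02383 — 3 statements merged into one kernel-verified Lean document; each statement's English description precedes it below -/
import Mathlib

section
/- If a mechanism M is f-DP, then for datasets differing in at most k individuals (k-neighbors), T(M(S), M(S')) ≥ 1 − (1−f)^{∘k}, where (1−f)^{∘k} denotes the k-fold iterated composition of the function x ↦ 1 − f(x). In particular, a μ-GDP mechanism is kμ-GDP for groups of size k. -/
open MeasureTheory ProbabilityTheory Set

noncomputable def tradeoff {Ω : Type*} [MeasurableSpace Ω] (P Q : Measure Ω) (α : ℝ) : ℝ :=
  sInf { β : ℝ | ∃ φ : Ω → ℝ, Measurable φ ∧ (∀ ω, φ ω ∈ Icc (0:ℝ) 1) ∧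
    (∫ ω, φ ω ∂P) ≤ α ∧ β = 1 - ∫ ω, φ ω ∂Q }

noncomputable def stdNormCDF (x : ℝ) : ℝ := cdf (gaussianReal 0 1) x

noncomputable def stdNormCDFInv (p : ℝ) : ℝ := sInf {x : ℝ | p ≤ stdNormCDF x}

noncomputable def Gmu (μ α : ℝ) : ℝ :=
  if α ≤ 0 then 1 else if 1 ≤ α then 0 else stdNormCDF (stdNormCDFInv (1 - α) - μ)

/-- `S` and `S'` are `k`-neighbors: there is a chain `S = c 0, c 1, …, c k = S'` in which
consecutive datasets are neighboring or identical. -/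
def kNeighbor {X : Type*} (Neighbor : X → X → Prop) (k : ℕ) (S S' : X) : Prop :=
  ∃ c : ℕ → X, c 0 = S ∧ c k = S' ∧ ∀ i < k, Neighbor (c i) (c (i + 1)) ∨ c i = c (i + 1)

section Aux

open Filter Function Topology

lemma gr_ne_zero {s : Set ℝ} (h : volume s ≠ 0) : gaussianReal 0 1 s ≠ 0 :=
  fun h0 => h (gaussianReal_absolutelyContinuous' 0 one_ne_zero h0)

lemma stdNormCDF_eq (x : ℝ) : stdNormCDF x = (gaussianReal 0 1 (Iic x)).toReal :=
  cdf_eq_real _ x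

lemma stdNormCDF_pos (x : ℝ) : 0 < stdNormCDF x := by
  rw [stdNormCDF_eq]
  refine ENNReal.toReal_pos (gr_ne_zero ?_) (measure_ne_top _ _)
  simp [Real.volume_Iic]

lemma stdNormCDF_lt_one (x : ℝ) : stdNormCDF x < 1 := by
  have hc : gaussianReal 0 1 (Iic x) + gaussianReal 0 1 (Ioi x) = 1 := by
    rw [← compl_Iic]
    rw [measure_add_measure_compl measurableSet_Iic, measure_univ]
  have h1 : gaussianReal 0 1 (Ioi x) ≠ 0 := gr_ne_zero (by simp [Real.volume_Ioi])
  have h2 : (gaussianReal 0 1 (Ioi x)).toReal > 0 :=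
    ENNReal.toReal_pos h1 (measure_ne_top _ _)
  have h3 : (gaussianReal 0 1 (Iic x)).toReal + (gaussianReal 0 1 (Ioi x)).toReal = 1 := by
    rw [← ENNReal.toReal_add (measure_ne_top _ _) (measure_ne_top _ _), hc, ENNReal.toReal_one]
  rw [stdNormCDF_eq]; linarith

lemma stdNormCDF_strictMono : StrictMono stdNormCDF := by
  intro x y hxy
  have hu : Iic x ∪ Ioc x y = Iic y := Iic_union_Ioc_eq_Iic hxy.le
  have hd : Disjoint (Iic x) (Ioc x y) := by
    rw [Set.disjoint_left]; rintro a (ha : a ≤ x) ⟨h1, _⟩; exact absurd ha (not_le.mpr h1)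
  have := measure_union (μ := gaussianReal 0 1) hd measurableSet_Ioc
  rw [hu] at this
  have hpos : (gaussianReal 0 1 (Ioc x y)).toReal > 0 :=
    ENNReal.toReal_pos (gr_ne_zero (by simp [Real.volume_Ioc, hxy])) (measure_ne_top _ _)
  have h3 : (gaussianReal 0 1 (Iic y)).toReal
      = (gaussianReal 0 1 (Iic x)).toReal + (gaussianReal 0 1 (Ioc x y)).toReal := by
    rw [this, ENNReal.toReal_add (measure_ne_top _ _) (measure_ne_top _ _)]
  rw [stdNormCDF_eq, stdNormCDF_eq]; linarith

lemma stdNormCDF_continuous : Continuous stdNormCDF := by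
  rw [continuous_iff_continuousAt]
  intro x
  have hm := (cdf (gaussianReal 0 1)).mono
  have : ContinuousAt (⇑(cdf (gaussianReal 0 1))) x := by
    rw [hm.continuousAt_iff_leftLim_eq_rightLim, (cdf (gaussianReal 0 1)).rightLim_eq]
    have hs : (cdf (gaussianReal 0 1)).measure {x} = 0 := by
      rw [measure_cdf]
      exact gaussianReal_absolutelyContinuous 0 one_ne_zero (Real.volume_singleton)
    rw [StieltjesFunction.measure_singleton, ENNReal.ofReal_eq_zero] at hs
    have h2 := hm.leftLim_le (le_refl x)
    linarith
  exact this

lemma stdNormCDF_surj {p : ℝ} (hp : p ∈ Ioo (0:ℝ) 1) : ∃ x, stdNormCDF x = p := by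
  have h1 : ∀ᶠ x in atBot, stdNormCDF x < p :=
    (tendsto_cdf_atBot (gaussianReal 0 1)).eventually (eventually_lt_nhds hp.1)
  have h2 : ∀ᶠ x in atTop, p < stdNormCDF x :=
    (tendsto_cdf_atTop (gaussianReal 0 1)).eventually (eventually_gt_nhds hp.2)
  obtain ⟨a, ha⟩ := h1.exists
  obtain ⟨b, hb⟩ := h2.exists
  have hab : a ≤ b := by
    by_contra h
    exact absurd (stdNormCDF_strictMono.monotone (le_of_not_ge h)) (by linarith [ha, hb])
  have := intermediate_value_Icc hab (stdNormCDF_continuous.continuousOn)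
  obtain ⟨x, _, hx⟩ := this ⟨ha.le, hb.le⟩
  exact ⟨x, hx⟩

lemma stdNormCDFInv_comp (x : ℝ) : stdNormCDFInv (stdNormCDF x) = x := by
  unfold stdNormCDFInv
  have : {y : ℝ | stdNormCDF x ≤ stdNormCDF y} = Ici x := by
    ext y; simp [stdNormCDF_strictMono.le_iff_le]
  rw [this, csInf_Ici]

lemma stdNormCDF_comp_inv {p : ℝ} (hp : p ∈ Ioo (0:ℝ) 1) :
    stdNormCDF (stdNormCDFInv p) = p := by
  obtain ⟨x, hx⟩ := stdNormCDF_surj hp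
  rw [← hx, stdNormCDFInv_comp]

lemma Gmu_eq {ν α : ℝ} (h : α ∈ Ioo (0:ℝ) 1) :
    Gmu ν α = stdNormCDF (stdNormCDFInv (1 - α) - ν) := by
  unfold Gmu
  rw [if_neg (by linarith [h.1]), if_neg (by linarith [h.2])]

lemma Gmu_mem {ν α : ℝ} (h : α ∈ Ioo (0:ℝ) 1) : Gmu ν α ∈ Ioo (0:ℝ) 1 := by
  rw [Gmu_eq h]; exact ⟨stdNormCDF_pos _, stdNormCDF_lt_one _⟩

lemma Gmu_step {ν ν' α : ℝ} (h : α ∈ Ioo (0:ℝ) 1) :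
    Gmu ν' (1 - Gmu ν α) = Gmu (ν + ν') α := by
  have hG : Gmu ν α ∈ Ioo (0:ℝ) 1 := Gmu_mem h
  have h2 : 1 - Gmu ν α ∈ Ioo (0:ℝ) 1 := ⟨by linarith [hG.2], by linarith [hG.1]⟩
  rw [Gmu_eq h2, Gmu_eq h, Gmu_eq h]
  have h3 : 1 - (1 - stdNormCDF (stdNormCDFInv (1 - α) - ν))
      = stdNormCDF (stdNormCDFInv (1 - α) - ν) := by ring
  rw [h3, stdNormCDFInv_comp]
  ring_nf

lemma integrable_of_test {Ω : Type*} [MeasurableSpace Ω] (P : Measure Ω)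
    [IsProbabilityMeasure P] {φ : Ω → ℝ} (hφm : Measurable φ)
    (hφ : ∀ ω, φ ω ∈ Icc (0:ℝ) 1) : Integrable φ P := by
  refine ⟨hφm.aestronglyMeasurable, ?_⟩
  apply HasFiniteIntegral.of_bounded (C := 1)
  filter_upwards with ω
  rw [Real.norm_eq_abs, abs_le]
  exact ⟨by linarith [(hφ ω).1], (hφ ω).2⟩

lemma integral_test_mem {Ω : Type*} [MeasurableSpace Ω] (P : Measure Ω)
    [IsProbabilityMeasure P] {φ : Ω → ℝ} (hφm : Measurable φ)
    (hφ : ∀ ω, φ ω ∈ Icc (0:ℝ) 1) : (∫ ω, φ ω ∂P) ∈ Icc (0:ℝ) 1 := by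
  constructor
  · exact integral_nonneg fun ω => (hφ ω).1
  · calc ∫ ω, φ ω ∂P ≤ ∫ _, (1:ℝ) ∂P :=
        integral_mono (integrable_of_test P hφm hφ) (integrable_const 1) fun ω => (hφ ω).2
    _ = 1 := by simp

lemma tradeoff_le_of_test {Ω : Type*} [MeasurableSpace Ω] (P Q : Measure Ω)
    [IsProbabilityMeasure P] [IsProbabilityMeasure Q] {φ : Ω → ℝ} {α : ℝ}
    (hφm : Measurable φ) (hφ : ∀ ω, φ ω ∈ Icc (0:ℝ) 1) (hα : (∫ ω, φ ω ∂P) ≤ α) :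
    tradeoff P Q α ≤ 1 - ∫ ω, φ ω ∂Q := by
  apply csInf_le
  · refine ⟨0, ?_⟩
    rintro β ⟨ψ, hψm, hψ, _, rfl⟩
    linarith [(integral_test_mem Q hψm hψ).2]
  · exact ⟨φ, hφm, hφ, hα, rfl⟩

lemma le_tradeoff {Ω : Type*} [MeasurableSpace Ω] (P Q : Measure Ω)
    [IsProbabilityMeasure P] [IsProbabilityMeasure Q] {α c : ℝ} (hα : α ∈ Icc (0:ℝ) 1)
    (h : ∀ φ : Ω → ℝ, Measurable φ → (∀ ω, φ ω ∈ Icc (0:ℝ) 1) →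
      (∫ ω, φ ω ∂P) ≤ α → c ≤ 1 - ∫ ω, φ ω ∂Q) :
    c ≤ tradeoff P Q α := by
  apply le_csInf
  · refine ⟨1 - α, fun _ => α, measurable_const, fun _ => hα, ?_, ?_⟩ <;> simp
  · rintro β ⟨φ, hφm, hφ, hint, rfl⟩
    exact h φ hφm hφ hint

end Aux

/-- Group privacy: if `M` is `f`-DP, then for `k`-neighbors `S, S'` we have
`T(M(S), M(S')) ≥ 1 - (1 - f)^{∘k}`; in particular a `μ`-GDP mechanism is `kμ`-GDP
for groups of size `k`. -/
theorem statement14 {X Ω : Type*} [MeasurableSpace Ω] (Neighbor : X → X → Prop)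
    (hN : Symmetric Neighbor) (M : X → Measure Ω) (hM : ∀ S, IsProbabilityMeasure (M S))
    (k : ℕ) (f : ℝ → ℝ)
    (hconv : ConvexOn ℝ (Icc (0:ℝ) 1) f) (hcont : ContinuousOn f (Icc (0:ℝ) 1))
    (hanti : AntitoneOn f (Icc (0:ℝ) 1)) (hle : ∀ x ∈ Icc (0:ℝ) 1, f x ≤ 1 - x)
    (hnn : ∀ x ∈ Icc (0:ℝ) 1, 0 ≤ f x)
    (hfDP : ∀ S S', Neighbor S S' → ∀ α ∈ Icc (0:ℝ) 1, f α ≤ tradeoff (M S) (M S') α) :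
    (∀ S S', kNeighbor Neighbor k S S' → ∀ α ∈ Icc (0:ℝ) 1,
        1 - (fun x => 1 - f x)^[k] α ≤ tradeoff (M S) (M S') α) ∧
    (∀ μ : ℝ, 0 ≤ μ → (∀ α ∈ Icc (0:ℝ) 1, f α = Gmu μ α) →
      ∀ S S', kNeighbor Neighbor k S S' → ∀ α ∈ Icc (0:ℝ) 1,
        Gmu ((k : ℝ) * μ) α ≤ tradeoff (M S) (M S') α) := by
  have := hM
  set g : ℝ → ℝ := fun x => 1 - f x with hg_def
  -- the iterates of g stay in [0,1]
  have hgmem : ∀ α ∈ Icc (0:ℝ) 1, ∀ i : ℕ, g^[i] α ∈ Icc (0:ℝ) 1 := by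
    intro α hα i
    induction i with
    | zero => simpa using hα
    | succ i ih =>
      rw [Function.iterate_succ_apply']
      refine ⟨by simpa [hg_def] using (hle _ ih).trans (by linarith [ih.1]), ?_⟩
      simp only [hg_def]
      linarith [hnn _ ih]
  have part1 : ∀ S S', kNeighbor Neighbor k S S' → ∀ α ∈ Icc (0:ℝ) 1,
      1 - g^[k] α ≤ tradeoff (M S) (M S') α := by
    rintro S S' ⟨c, hc0, hck, hstep⟩ α hα
    refine le_tradeoff (M S) (M S') hα ?_
    intro φ hφm hφ hint
    have key : ∀ i, i ≤ k → (∫ ω, φ ω ∂(M (c i))) ≤ g^[i] α := by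
      intro i
      induction i with
      | zero => intro _; rw [hc0]; simpa using hint
      | succ i ih =>
        intro hik
        have hik' : i < k := Nat.lt_of_succ_le hik
        have hi := ih hik'.le
        have hβ : (∫ ω, φ ω ∂(M (c i))) ∈ Icc (0:ℝ) 1 := integral_test_mem _ hφm hφ
        have hgi := hgmem α hα i
        rw [Function.iterate_succ_apply']
        rcases hstep i hik' with hn | he
        · have h1 : f (∫ ω, φ ω ∂(M (c i))) ≤ tradeoff (M (c i)) (M (c (i + 1)))
              (∫ ω, φ ω ∂(M (c i))) := hfDP _ _ hn _ hβ
          have h2 : tradeoff (M (c i)) (M (c (i + 1))) (∫ ω, φ ω ∂(M (c i)))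
              ≤ 1 - ∫ ω, φ ω ∂(M (c (i + 1))) := tradeoff_le_of_test _ _ hφm hφ le_rfl
          have h3 : f (g^[i] α) ≤ f (∫ ω, φ ω ∂(M (c i))) := hanti hβ hgi hi
          simp only [hg_def]
          linarith
        · rw [← he]
          simp only [hg_def]
          linarith [hle _ hgi]
    have hk := key k le_rfl
    rw [hck] at hk
    linarith
  refine ⟨part1, ?_⟩
  intro μ hμ hf S S' hSS' α hα
  have hb := part1 S S' hSS' α hα
  rcases eq_or_lt_of_le hα.1 with h0 | h0
  · -- α = 0
    have hα0 : α = 0 := h0.symm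
    have hit : ∀ i : ℕ, g^[i] (0:ℝ) = 0 := by
      intro i
      induction i with
      | zero => simp
      | succ i ih =>
        rw [Function.iterate_succ_apply', ih]
        have : f 0 = Gmu μ 0 := hf 0 ⟨le_rfl, zero_le_one⟩
        simp only [hg_def, this, Gmu, if_pos le_rfl]
        ring
    rw [hα0] at hb ⊢
    rw [hit k] at hb
    have : Gmu ((k : ℝ) * μ) 0 = 1 := by simp [Gmu]
    rw [this]
    linarith
  rcases eq_or_lt_of_le hα.2 with h1 | h1
  · -- α = 1
    have hα1 : α = 1 := h1
    have hGk : Gmu ((k : ℝ) * μ) 1 = 0 := by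
      simp only [Gmu, if_neg (by norm_num : ¬ (1:ℝ) ≤ 0), if_pos le_rfl]
    have hf1 : f 1 = 0 := by
      have := hf 1 ⟨zero_le_one, le_rfl⟩
      simp only [Gmu, if_neg (by norm_num : ¬ (1:ℝ) ≤ 0), if_pos le_rfl] at this
      exact this
    have hit : ∀ i : ℕ, g^[i] (1:ℝ) = 1 := by
      intro i
      induction i with
      | zero => simp
      | succ i ih =>
        rw [Function.iterate_succ_apply', ih]
        simp [hg_def, hf1]
    rw [hα1] at hb ⊢
    rw [hit k] at hb
    rw [hGk]
    linarith
  · -- α ∈ Ioo 0 1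
    have hαI : α ∈ Ioo (0:ℝ) 1 := ⟨h0, h1⟩
    have hit : ∀ i : ℕ, g^[i] α = 1 - Gmu ((i : ℝ) * μ) α := by
      intro i
      induction i with
      | zero =>
        simp only [Function.iterate_zero_apply, Nat.cast_zero, zero_mul]
        rw [Gmu_eq hαI]
        rw [sub_zero, stdNormCDF_comp_inv ⟨by linarith [hαI.2], by linarith [hαI.1]⟩]
        ring
      | succ i ih =>
        rw [Function.iterate_succ_apply', ih]
        have hGmem : 1 - Gmu ((i : ℝ) * μ) α ∈ Ioo (0:ℝ) 1 := by
          have := Gmu_mem (ν := (i : ℝ) * μ) hαI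
          exact ⟨by linarith [this.2], by linarith [this.1]⟩
        have hfeq : f (1 - Gmu ((i : ℝ) * μ) α) = Gmu μ (1 - Gmu ((i : ℝ) * μ) α) :=
          hf _ ⟨hGmem.1.le, hGmem.2.le⟩
        simp only [hg_def, hfeq]
        rw [Gmu_step hαI]
        push_cast
        ring_nf
    rw [hit k] at hb
    have : 1 - (1 - Gmu ((k : ℝ) * μ) α) = Gmu ((k : ℝ) * μ) α := by ring
    rw [this] at hb
    exact hb
end

section
/- The trade-off function between Lap(0,1) and Lap(μ,1) for μ ≥ 0 is given piecewise by: 1 − e^μ α for α < e^{−μ}/2; e^{−μ}/(4α) for e^{−μ}/2 ≤ α ≤ 1/2; and e^{−μ}(1−α) for α > 1/2. -/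
open MeasureTheory ProbabilityTheory Set
open scoped ENNReal NNReal

/-- The Laplace distribution `Lap(m, 1)` with density `(1/2) e^{-|x-m|}`. -/
noncomputable def lapMeasure (m : ℝ) : Measure ℝ :=
  (volume : Measure ℝ).withDensity fun x => ENNReal.ofReal (Real.exp (-|x - m|) / 2)

noncomputable def lapd (m : ℝ) (x : ℝ) : ℝ := Real.exp (-|x - m|) / 2

section helpers
lemma lapd_pos (m x : ℝ) : 0 < lapd m x := by
  unfold lapd; positivity

lemma lapd_nonneg (m x : ℝ) : 0 ≤ lapd m x := (lapd_pos m x).le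

lemma measurable_lapd (m : ℝ) : Measurable (lapd m) :=
  (((measurable_id.sub_const m).abs.neg.exp).div_const 2)

lemma lapd_le_left (m x : ℝ) : lapd m x ≤ Real.exp (-m) / 2 * Real.exp x := by
  unfold lapd
  rw [div_mul_eq_mul_div, ← Real.exp_add]
  have h : -|x - m| ≤ -m + x := by
    have := neg_abs_le (x - m); linarith
  have := Real.exp_le_exp.mpr h
  linarith

lemma lapd_le_right (m x : ℝ) : lapd m x ≤ Real.exp m / 2 * Real.exp (-x) := by
  unfold lapd
  rw [div_mul_eq_mul_div, ← Real.exp_add]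
  have h : -|x - m| ≤ m + -x := by
    have h2 : |m - x| = |x - m| := abs_sub_comm m x
    have := neg_abs_le (m - x)
    rw [h2] at this; linarith
  have := Real.exp_le_exp.mpr h
  linarith

lemma integrable_lapd (m : ℝ) : Integrable (lapd m) := by
  rw [← integrableOn_univ, ← Set.Iic_union_Ioi (a := m)]
  apply IntegrableOn.union
  · apply Integrable.mono ((integrableOn_exp_Iic m).const_mul (Real.exp (-m) / 2))
      ((measurable_lapd m).aestronglyMeasurable)
    filter_upwards with x
    rw [Real.norm_eq_abs, Real.norm_eq_abs, abs_of_nonneg (lapd_nonneg m x),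
      abs_of_nonneg (by positivity)]
    exact lapd_le_left m x
  · apply Integrable.mono ((exp_neg_integrableOn_Ioi m one_pos).const_mul (Real.exp m / 2))
      ((measurable_lapd m).aestronglyMeasurable)
    filter_upwards with x
    rw [Real.norm_eq_abs, Real.norm_eq_abs, abs_of_nonneg (lapd_nonneg m x),
      abs_of_nonneg (by positivity)]
    simpa [neg_one_mul] using lapd_le_right m x

lemma integral_lapd_Ici_ge {m t : ℝ} (h : m ≤ t) :
    ∫ x in Ici t, lapd m x = Real.exp (m - t) / 2 := by
  rw [integral_Ici_eq_integral_Ioi]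
  have hcong : ∀ x ∈ Ioi t, lapd m x = Real.exp m / 2 * Real.exp (-x) := by
    intro x hx
    have hx' : (0:ℝ) ≤ x - m := by simp only [mem_Ioi] at hx; linarith
    rw [lapd, abs_of_nonneg hx', show -(x - m) = m + -x by ring, Real.exp_add,
      div_mul_eq_mul_div, mul_comm]
  rw [setIntegral_congr_fun measurableSet_Ioi hcong, integral_const_mul,
    integral_exp_neg_Ioi, show m - t = m + -t by ring, Real.exp_add]
  ring

lemma integral_lapd_Ici_le {m t : ℝ} (h : t ≤ m) :
    ∫ x in Ici t, lapd m x = 1 - Real.exp (t - m) / 2 := by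
  rw [integral_Ici_eq_integral_Ioi, ← Set.Ioc_union_Ioi_eq_Ioi h,
    setIntegral_union (Set.Ioc_disjoint_Ioi le_rfl) measurableSet_Ioi
      ((integrable_lapd m).integrableOn) ((integrable_lapd m).integrableOn)]
  have h1 : ∫ x in Ioc t m, lapd m x = Real.exp (-m) / 2 * (Real.exp m - Real.exp t) := by
    have hcong : ∀ x ∈ Ioc t m, lapd m x = Real.exp (-m) / 2 * Real.exp x := by
      intro x hx
      have hx' : x - m ≤ 0 := by simp only [mem_Ioc] at hx; linarith
      rw [lapd, abs_of_nonpos hx', show -(-(x - m)) = -m + x by ring, Real.exp_add,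
        div_mul_eq_mul_div, mul_comm]
    rw [setIntegral_congr_fun measurableSet_Ioc hcong, integral_const_mul,
      ← intervalIntegral.integral_of_le h, integral_exp]
  have h2 : ∫ x in Ioi m, lapd m x = 1 / 2 := by
    rw [← integral_Ici_eq_integral_Ioi, integral_lapd_Ici_ge le_rfl]
    simp
  rw [h1, h2]
  have e1 : Real.exp (-m) * Real.exp m = 1 := by
    rw [← Real.exp_add]; simp
  have e2 : Real.exp (t - m) = Real.exp t * Real.exp (-m) := by
    rw [← Real.exp_add]; ring_nf
  nlinarith [Real.exp_pos t, Real.exp_pos (-m)]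

lemma integral_lapd_total (m : ℝ) : ∫ x, lapd m x = 1 := by
  rw [← setIntegral_univ, ← Set.Iic_union_Ioi (a := m),
    setIntegral_union (Set.Iic_disjoint_Ioi le_rfl) measurableSet_Ioi
      ((integrable_lapd m).integrableOn) ((integrable_lapd m).integrableOn)]
  have h1 : ∫ x in Iic m, lapd m x = 1 / 2 := by
    have hcong : ∀ x ∈ Iic m, lapd m x = Real.exp (-m) / 2 * Real.exp x := by
      intro x hx
      have hx' : x - m ≤ 0 := by simp only [mem_Iic] at hx; linarith
      rw [lapd, abs_of_nonpos hx', show -(-(x - m)) = -m + x by ring, Real.exp_add,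
        div_mul_eq_mul_div, mul_comm]
    rw [setIntegral_congr_fun measurableSet_Iic hcong, integral_const_mul, integral_exp_Iic]
    rw [div_mul_eq_mul_div, ← Real.exp_add]; simp
  have h2 : ∫ x in Ioi m, lapd m x = 1 / 2 := by
    rw [← integral_Ici_eq_integral_Ioi, integral_lapd_Ici_ge le_rfl]
    simp
  rw [h1, h2]; norm_num

lemma integrable_mul_lapd (m : ℝ) {φ : ℝ → ℝ} (hm : Measurable φ)
    (hr : ∀ x, φ x ∈ Icc (0:ℝ) 1) : Integrable (fun x => φ x * lapd m x) := by
  apply Integrable.mono (integrable_lapd m) ((hm.mul (measurable_lapd m)).aestronglyMeasurable)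
  filter_upwards with x
  rw [Real.norm_eq_abs, Real.norm_eq_abs, abs_of_nonneg (lapd_nonneg m x),
    Pi.mul_apply, abs_of_nonneg (mul_nonneg (hr x).1 (lapd_nonneg m x))]
  calc φ x * lapd m x ≤ 1 * lapd m x := by
        exact mul_le_mul_of_nonneg_right (hr x).2 (lapd_nonneg m x)
    _ = lapd m x := one_mul _

lemma integral_lapMeasure (m : ℝ) {φ : ℝ → ℝ} (hm : Measurable φ)
    (hr : ∀ x, φ x ∈ Icc (0:ℝ) 1) :
    ∫ ω, φ ω ∂(lapMeasure m) = ∫ x, φ x * lapd m x := by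
  have hd : lapMeasure m
      = (volume : Measure ℝ).withDensity fun x => ((lapd m x).toNNReal : ℝ≥0∞) := by
    unfold lapMeasure lapd
    congr 1
  rw [hd, integral_withDensity_eq_integral_smul (measurable_lapd m).real_toNNReal]
  congr 1
  funext x
  rw [NNReal.smul_def, Real.coe_toNNReal _ (lapd_nonneg m x), smul_eq_mul, mul_comm]

lemma integral_indicator_lapMeasure (m t : ℝ) :
    ∫ ω, (Ici t).indicator (fun _ => (1:ℝ)) ω ∂(lapMeasure m) = ∫ x in Ici t, lapd m x := by
  rw [integral_lapMeasure m (measurable_const.indicator measurableSet_Ici)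
    (by intro x; by_cases hx : x ∈ Ici t <;> simp [hx])]
  have : (fun x => (Ici t).indicator (fun _ => (1:ℝ)) x * lapd m x)
      = (Ici t).indicator (lapd m) := by
    funext x; by_cases hx : x ∈ Ici t <;> simp [hx]
  rw [this, integral_indicator measurableSet_Ici]

/-- Neyman–Pearson style inequality. -/
lemma NP_bound (m₁ m₂ t k : ℝ) (hk : 0 ≤ k)
    (hub : ∀ x, x < t → lapd m₂ x ≤ k * lapd m₁ x)
    (hlb : ∀ x, t ≤ x → k * lapd m₁ x ≤ lapd m₂ x)
    {φ : ℝ → ℝ} (hm : Measurable φ) (hr : ∀ x, φ x ∈ Icc (0:ℝ) 1) :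
    (∫ x, φ x * lapd m₂ x) - k * ∫ x, φ x * lapd m₁ x
      ≤ (∫ x in Ici t, lapd m₂ x) - k * ∫ x in Ici t, lapd m₁ x := by
  have hint2 := integrable_mul_lapd m₂ hm hr
  have hint1 := integrable_mul_lapd m₁ hm hr
  have hdiff : Integrable (fun x => lapd m₂ x - k * lapd m₁ x) :=
    (integrable_lapd m₂).sub ((integrable_lapd m₁).const_mul k)
  have hindint : Integrable ((Ici t).indicator (fun x => lapd m₂ x - k * lapd m₁ x)) :=
    hdiff.indicator measurableSet_Ici
  have hptwise : ∀ x, φ x * lapd m₂ x - k * (φ x * lapd m₁ x)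
      ≤ (Ici t).indicator (fun x => lapd m₂ x - k * lapd m₁ x) x := by
    intro x
    by_cases hx : x ∈ Ici t
    · simp only [indicator_of_mem hx]
      have h1 := hlb x hx
      have h2 := (hr x).2
      nlinarith [lapd_nonneg m₁ x, lapd_nonneg m₂ x, (hr x).1]
    · simp only [indicator_of_notMem hx]
      have h1 := hub x (by simpa using hx)
      nlinarith [(hr x).1]
  calc (∫ x, φ x * lapd m₂ x) - k * ∫ x, φ x * lapd m₁ x
      = ∫ x, (φ x * lapd m₂ x - k * (φ x * lapd m₁ x)) := by
        rw [integral_sub hint2 (hint1.const_mul k), integral_const_mul]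
    _ ≤ ∫ x, (Ici t).indicator (fun x => lapd m₂ x - k * lapd m₁ x) x :=
        integral_mono (hint2.sub (hint1.const_mul k)) hindint hptwise
    _ = (∫ x in Ici t, lapd m₂ x) - k * ∫ x in Ici t, lapd m₁ x := by
        rw [integral_indicator measurableSet_Ici,
          integral_sub ((integrable_lapd m₂).integrableOn)
            (((integrable_lapd m₁).const_mul k).integrableOn), integral_const_mul]

lemma g_mono {μ : ℝ} (hμ : 0 ≤ μ) {x y : ℝ} (h : x ≤ y) :
    |x| - |x - μ| ≤ |y| - |y - μ| := by
  rcases abs_cases x with ⟨e1, i1⟩ | ⟨e1, i1⟩ <;>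
    rcases abs_cases (x - μ) with ⟨e2, i2⟩ | ⟨e2, i2⟩ <;>
    rcases abs_cases y with ⟨e3, i3⟩ | ⟨e3, i3⟩ <;>
    rcases abs_cases (y - μ) with ⟨e4, i4⟩ | ⟨e4, i4⟩ <;>
    rw [e1, e2, e3, e4] <;> linarith


lemma lapd_ratio_le {c x μ : ℝ} (h : |x| - |x - μ| ≤ c) : lapd μ x ≤ Real.exp c * lapd 0 x := by
  unfold lapd
  rw [sub_zero]
  have h2 := Real.exp_le_exp.mpr (show -|x - μ| ≤ c + -|x| by linarith)
  rw [Real.exp_add] at h2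
  nlinarith

lemma lapd_ratio_ge {c x μ : ℝ} (h : c ≤ |x| - |x - μ|) : Real.exp c * lapd 0 x ≤ lapd μ x := by
  unfold lapd
  rw [sub_zero]
  have h2 := Real.exp_le_exp.mpr (show c + -|x| ≤ -|x - μ| by linarith)
  rw [Real.exp_add] at h2
  nlinarith

lemma g_le_mu {μ : ℝ} (hμ : 0 ≤ μ) (x : ℝ) : |x| - |x - μ| ≤ μ := by
  rcases abs_cases x with ⟨e1, i1⟩ | ⟨e1, i1⟩ <;>
    rcases abs_cases (x - μ) with ⟨e2, i2⟩ | ⟨e2, i2⟩ <;> rw [e1, e2] <;> linarith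

lemma g_ge_neg_mu {μ : ℝ} (hμ : 0 ≤ μ) (x : ℝ) : -μ ≤ |x| - |x - μ| := by
  rcases abs_cases x with ⟨e1, i1⟩ | ⟨e1, i1⟩ <;>
    rcases abs_cases (x - μ) with ⟨e2, i2⟩ | ⟨e2, i2⟩ <;> rw [e1, e2] <;> linarith

lemma sInf_eq_of_mem_of_lb {S : Set ℝ} {v : ℝ} (hmem : v ∈ S) (hlb : ∀ b ∈ S, v ≤ b) :
    sInf S = v :=
  le_antisymm (csInf_le ⟨v, hlb⟩ hmem) (le_csInf ⟨v, hmem⟩ hlb)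

end helpers

/-- The trade-off function between `Lap(0,1)` and `Lap(μ,1)` for `μ ≥ 0`:
`1 - e^μ α` for `α < e^{-μ}/2`; `e^{-μ}/(4α)` for `e^{-μ}/2 ≤ α ≤ 1/2`;
and `e^{-μ}(1-α)` for `α > 1/2`. -/
theorem statement16 (μ : ℝ) (hμ : 0 ≤ μ) :
    ∀ α ∈ Icc (0:ℝ) 1,
      tradeoff (lapMeasure 0) (lapMeasure μ) α =
        if α < Real.exp (-μ) / 2 then 1 - Real.exp μ * α
        else if α ≤ 1 / 2 then Real.exp (-μ) / (4 * α)
        else Real.exp (-μ) * (1 - α) := by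
  intro α hα
  obtain ⟨hα0, hα1⟩ := hα
  unfold tradeoff
  set S := { β : ℝ | ∃ φ : ℝ → ℝ, Measurable φ ∧ (∀ ω, φ ω ∈ Icc (0:ℝ) 1) ∧
    (∫ ω, φ ω ∂(lapMeasure 0)) ≤ α ∧ β = 1 - ∫ ω, φ ω ∂(lapMeasure μ) } with hS
  -- membership via threshold tests
  have hmem_t : ∀ t : ℝ, (∫ x in Ici t, lapd 0 x) ≤ α →
      (1 - ∫ x in Ici t, lapd μ x) ∈ S := by
    intro t ht
    refine ⟨(Ici t).indicator (fun _ => 1), measurable_const.indicator measurableSet_Ici,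
      ?_, ?_, ?_⟩
    · intro x; by_cases hx : x ∈ Ici t <;> simp [hx, mem_Icc]
    · rw [integral_indicator_lapMeasure]; exact ht
    · rw [integral_indicator_lapMeasure]
  split_ifs with h1 h2
  · -- case 1 : α < exp(-μ)/2
    apply sInf_eq_of_mem_of_lb
    · -- membership
      rcases eq_or_lt_of_le hα0 with h0 | h0
      · refine ⟨fun _ => 0, measurable_const, by intro x; simp [mem_Icc], ?_, ?_⟩
        · simp [← h0]
        · simp [← h0]
      · have h2α : (0:ℝ) < 2 * α := by linarith
        set t := -Real.log (2 * α) with htdef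
        have hexp_t : Real.exp (-t) = 2 * α := by
          rw [htdef, neg_neg, Real.exp_log h2α]
        have hμt : μ ≤ t := by
          have : Real.log (2 * α) < -μ := by
            rw [Real.log_lt_iff_lt_exp h2α]; linarith
          rw [htdef]; linarith
        have h0t : (0:ℝ) ≤ t := le_trans hμ hμt
        have hA : ∫ x in Ici t, lapd 0 x = α := by
          rw [integral_lapd_Ici_ge h0t, zero_sub, hexp_t]; ring
        have hB : ∫ x in Ici t, lapd μ x = Real.exp μ * α := by
          rw [integral_lapd_Ici_ge hμt, show μ - t = μ + -t by ring, Real.exp_add, hexp_t]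
          ring
        have := hmem_t t (le_of_eq hA)
        rwa [hB] at this
    · -- lower bound
      rintro b ⟨φ, hφm, hφr, hφP, rfl⟩
      rw [integral_lapMeasure μ hφm hφr]
      rw [integral_lapMeasure 0 hφm hφr] at hφP
      have hmono : ∫ x, φ x * lapd μ x ≤ ∫ x, Real.exp μ * (φ x * lapd 0 x) := by
        apply integral_mono (integrable_mul_lapd μ hφm hφr)
          (((integrable_mul_lapd 0 hφm hφr)).const_mul _)
        intro x
        dsimp only
        have h := lapd_ratio_le (μ := μ) (g_le_mu hμ x)
        nlinarith [mul_le_mul_of_nonneg_left h (hφr x).1, (hφr x).1]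
      rw [integral_const_mul] at hmono
      have : ∫ x, φ x * lapd μ x ≤ Real.exp μ * α := by
        refine le_trans hmono ?_
        exact mul_le_mul_of_nonneg_left hφP (Real.exp_pos μ).le
      linarith
  · -- case 2 : exp(-μ)/2 ≤ α ≤ 1/2
    have hαpos : 0 < α := lt_of_lt_of_le (by positivity) (not_lt.mp h1)
    have h2α : (0:ℝ) < 2 * α := by linarith
    set t := -Real.log (2 * α) with htdef
    have hexp_t : Real.exp (-t) = 2 * α := by rw [htdef, neg_neg, Real.exp_log h2α]
    have h0t : (0:ℝ) ≤ t := by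
      have := Real.log_nonpos (by linarith) (by linarith : 2 * α ≤ 1)
      rw [htdef]; linarith
    have htμ : t ≤ μ := by
      have : -μ ≤ Real.log (2 * α) := by
        rw [Real.le_log_iff_exp_le h2α]; linarith [not_lt.mp h1]
      rw [htdef]; linarith
    have hexp_t' : Real.exp t = (2 * α)⁻¹ := by
      rw [← hexp_t, ← Real.exp_neg, neg_neg]
    have hA : ∫ x in Ici t, lapd 0 x = α := by
      rw [integral_lapd_Ici_ge h0t, zero_sub, hexp_t]; ring
    have hB : ∫ x in Ici t, lapd μ x = 1 - Real.exp (-μ) / (4 * α) := by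
      rw [integral_lapd_Ici_le htμ, show t - μ = t + -μ by ring, Real.exp_add, hexp_t']
      field_simp
      ring
    apply sInf_eq_of_mem_of_lb
    · have := hmem_t t (le_of_eq hA)
      rw [hB] at this
      simpa using this
    · rintro b ⟨φ, hφm, hφr, hφP, rfl⟩
      rw [integral_lapMeasure μ hφm hφr]
      rw [integral_lapMeasure 0 hφm hφr] at hφP
      set k := Real.exp (2 * t - μ) with hkdef
      have hgt : |t| - |t - μ| = 2 * t - μ := by
        rw [abs_of_nonneg h0t, abs_of_nonpos (by linarith)]; ring
      have hub : ∀ x, x < t → lapd μ x ≤ k * lapd 0 x := by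
        intro x hx
        exact lapd_ratio_le (hgt ▸ g_mono hμ hx.le)
      have hlb : ∀ x, t ≤ x → k * lapd 0 x ≤ lapd μ x := by
        intro x hx
        exact lapd_ratio_ge (hgt ▸ g_mono hμ hx)
      have hNP := NP_bound 0 μ t k (Real.exp_pos _).le hub hlb hφm hφr
      rw [hA, hB] at hNP
      have hk0 : 0 ≤ k := (Real.exp_pos _).le
      nlinarith [mul_le_mul_of_nonneg_left hφP hk0]
  · -- case 3 : 1/2 < α
    push_neg at h2
    rcases eq_or_lt_of_le hα1 with h1' | h1'
    · -- α = 1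
      apply sInf_eq_of_mem_of_lb
      · refine ⟨fun _ => 1, measurable_const, by intro x; simp [mem_Icc], ?_, ?_⟩
        · rw [integral_lapMeasure 0 measurable_const (by intro x; simp [mem_Icc])]
          simp only [one_mul]
          rw [integral_lapd_total]
          linarith
        · rw [integral_lapMeasure μ measurable_const (by intro x; simp [mem_Icc])]
          simp only [one_mul]
          rw [integral_lapd_total, h1']
          ring
      · rintro b ⟨φ, hφm, hφr, hφP, rfl⟩
        rw [integral_lapMeasure μ hφm hφr]
        have : ∫ x, φ x * lapd μ x ≤ ∫ x, lapd μ x := by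
          apply integral_mono (integrable_mul_lapd μ hφm hφr) (integrable_lapd μ)
          intro x
          dsimp only
          nlinarith [(hφr x).1, (hφr x).2, lapd_nonneg μ x]
        rw [integral_lapd_total] at this
        rw [← h1']
        linarith
    · -- 1/2 < α < 1
      have h2α : (0:ℝ) < 2 * (1 - α) := by linarith
      set t := Real.log (2 * (1 - α)) with htdef
      have hexp_t : Real.exp t = 2 * (1 - α) := Real.exp_log h2α
      have ht0 : t ≤ 0 := Real.log_nonpos (by linarith) (by linarith)
      have htμ : t ≤ μ := le_trans ht0 hμ
      have hA : ∫ x in Ici t, lapd 0 x = α := by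
        rw [integral_lapd_Ici_le ht0, sub_zero, hexp_t]; ring
      have hB : ∫ x in Ici t, lapd μ x = 1 - Real.exp (-μ) * (1 - α) := by
        rw [integral_lapd_Ici_le htμ, show t - μ = t + -μ by ring, Real.exp_add, hexp_t]
        ring
      apply sInf_eq_of_mem_of_lb
      · have := hmem_t t (le_of_eq hA)
        rw [hB] at this
        simpa using this
      · rintro b ⟨φ, hφm, hφr, hφP, rfl⟩
        rw [integral_lapMeasure μ hφm hφr]
        rw [integral_lapMeasure 0 hφm hφr] at hφP
        set k := Real.exp (-μ) with hkdef
        have hub : ∀ x, x < t → lapd μ x ≤ k * lapd 0 x := by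
          intro x hx
          apply lapd_ratio_le
          have hx0 : x ≤ 0 := le_trans hx.le ht0
          rw [abs_of_nonpos hx0, abs_of_nonpos (by linarith)]
          linarith
        have hlb : ∀ x, t ≤ x → k * lapd 0 x ≤ lapd μ x := by
          intro x _
          exact lapd_ratio_ge (g_ge_neg_mu hμ x)
        have hNP := NP_bound 0 μ t k (Real.exp_pos _).le hub hlb hφm hφr
        rw [hA, hB] at hNP
        have hk0 : 0 ≤ k := (Real.exp_pos _).le
        nlinarith [mul_le_mul_of_nonneg_left hφP hk0]
end

section
/- Let P be a probability distribution on ℝ with density p, CDF F, and let ξ ~ P. Then T(ξ, t+ξ)(α) = F(F⁻¹(1−α) − t) holds for every t > 0 if and only if p is log-concave. -/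
open MeasureTheory ProbabilityTheory Set

/-- The probability measure on `ℝ` with density `p` w.r.t. Lebesgue measure. -/
noncomputable def densMeasure (p : ℝ → ℝ) : Measure ℝ :=
  (volume : Measure ℝ).withDensity fun x => ENNReal.ofReal (p x)

/-- The quantile function `F⁻¹` of a measure `P` on `ℝ`. -/
noncomputable def quantile (P : Measure ℝ) (u : ℝ) : ℝ :=
  sInf {x : ℝ | u ≤ cdf P x}

open Filter

set_option linter.unusedSectionVars false

section Aux

variable {p : ℝ → ℝ} (hp0 : ∀ x, 0 ≤ p x) (hpm : Measurable p)
lemma densMeasure_apply (s : Set ℝ) (hs : MeasurableSet s) :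
    densMeasure p s = ∫⁻ x in s, ENNReal.ofReal (p x) := withDensity_apply _ hs

include hp0 hpm

lemma integrable_p (hP : IsProbabilityMeasure (densMeasure p)) : Integrable p volume := by
  refine ⟨hpm.aestronglyMeasurable, ?_⟩
  have h1 : densMeasure p univ = 1 := measure_univ
  rw [densMeasure_apply _ MeasurableSet.univ, Measure.restrict_univ] at h1
  rw [HasFiniteIntegral]
  have : ∀ x, ‖p x‖ₑ = ENNReal.ofReal (p x) := by
    intro x
    exact (Real.enorm_eq_ofReal (hp0 x))
  simp only [this, h1]
  exact ENNReal.one_lt_top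

lemma densMeasure_toReal (s : Set ℝ) (hs : MeasurableSet s) :
    (densMeasure p s).toReal = ∫ x in s, p x := by
  rw [densMeasure_apply s hs,
    integral_eq_lintegral_of_nonneg_ae (Eventually.of_forall fun x => hp0 x)
      hpm.aestronglyMeasurable.restrict]

lemma cdf_densMeasure (hP : IsProbabilityMeasure (densMeasure p)) (x : ℝ) :
    cdf (densMeasure p) x = ∫ y in Iic x, p y := by
  rw [cdf_eq_real, measureReal_def, densMeasure_toReal hp0 hpm _ measurableSet_Iic]

/-- the cdf as interval integral primitive -/
lemma cdf_sub_cdf (hP : IsProbabilityMeasure (densMeasure p)) {a b : ℝ} (hab : a ≤ b) :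
    cdf (densMeasure p) b - cdf (densMeasure p) a = ∫ y in a..b, p y := by
  rw [cdf_densMeasure hp0 hpm hP, cdf_densMeasure hp0 hpm hP,
    intervalIntegral.integral_of_le hab]
  have h : Iic b = Iic a ∪ Ioc a b := (Iic_union_Ioc_eq_Iic hab).symm
  rw [h, setIntegral_union (Iic_disjoint_Ioc le_rfl) measurableSet_Ioc
    ((integrable_p hp0 hpm hP).integrableOn) ((integrable_p hp0 hpm hP).integrableOn)]
  ring

lemma continuous_cdf_densMeasure (hP : IsProbabilityMeasure (densMeasure p)) :
    Continuous (cdf (densMeasure p)) := by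
  have h : ∀ x, cdf (densMeasure p) x = cdf (densMeasure p) 0 + ∫ y in (0:ℝ)..x, p y := by
    intro x
    rcases le_total 0 x with h0 | h0
    · rw [← cdf_sub_cdf hp0 hpm hP h0]; ring
    · have h2 := cdf_sub_cdf hp0 hpm hP h0
      rw [intervalIntegral.integral_symm, ← h2]; ring
  have h3 := (integrable_p hp0 hpm hP).continuous_primitive 0
  have h4 : (fun x => cdf (densMeasure p) x)
      = fun x => cdf (densMeasure p) 0 + ∫ y in (0:ℝ)..x, p y := funext h
  show Continuous fun x => cdf (densMeasure p) x
  rw [h4]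
  exact continuous_const.add h3


variable (hpc : Continuous p) (hP : IsProbabilityMeasure (densMeasure p))
include hpc

/-- Positive integral over an interval from a positive interior point. -/
lemma pos_setIntegral {a b x₀ : ℝ} (hx₀ : x₀ ∈ Ioo a b)
    (hpx : 0 < p x₀) (hint : Integrable p volume) : 0 < ∫ y in Ioc a b, p y := by
  obtain ⟨δ, hδ, hball⟩ := Metric.eventually_nhds_iff_ball.mp
    ((hpc.tendsto x₀).eventually_const_lt (half_lt_self hpx))
  set δ' := min δ (min (x₀ - a) (b - x₀)) with hδ'
  have hδ'pos : 0 < δ' := lt_min hδ (lt_min (by linarith [hx₀.1]) (by linarith [hx₀.2]))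
  have hsub : Ioc (x₀ - δ'/2) x₀ ⊆ Ioc a b := by
    intro y hy
    constructor
    · have : δ' ≤ x₀ - a := (min_le_right _ _).trans (min_le_left _ _)
      have := hy.1; simp only [mem_Ioc] at *; linarith
    · exact hy.2.trans (by linarith [hx₀.2])
  have hlow : ∀ y ∈ Ioc (x₀ - δ'/2) x₀, p x₀ / 2 ≤ p y := by
    intro y hy
    refine le_of_lt (hball y ?_)
    rw [Metric.mem_ball, Real.dist_eq, abs_lt]
    have h1 := hy.1; have h2 := hy.2
    have : δ' ≤ δ := min_le_left _ _
    constructor <;> linarith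
  have h1 : 0 < ∫ y in Ioc (x₀ - δ'/2) x₀, p y := by
    have hmeas : MeasurableSet (Ioc (x₀ - δ'/2) x₀) := measurableSet_Ioc
    calc (0:ℝ) < (p x₀ / 2) * (volume (Ioc (x₀ - δ'/2) x₀)).toReal := by
          rw [Real.volume_Ioc]
          have : (0:ℝ) < x₀ - (x₀ - δ'/2) := by linarith
          rw [ENNReal.toReal_ofReal this.le]
          positivity
      _ ≤ ∫ y in Ioc (x₀ - δ'/2) x₀, p y := by
          apply setIntegral_ge_of_const_le_real hmeas
          · rw [Real.volume_Ioc]; exact ENNReal.ofReal_ne_top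
          · exact hlow
          · exact hint.integrableOn
  calc (0:ℝ) < ∫ y in Ioc (x₀ - δ'/2) x₀, p y := h1
    _ ≤ ∫ y in Ioc a b, p y :=
        setIntegral_mono_set hint.integrableOn
          (Eventually.of_forall hp0) (HasSubset.Subset.eventuallyLE hsub)

include hpc hP in
/-- If `p` is positive on an interval just below `c` then `F` is strictly
increasing at `c` from the left, hence the quantile of `F c` is `c`. -/
lemma quantile_cdf_self {c : ℝ} (hpc2 : 0 < p c) :
    quantile (densMeasure p) (cdf (densMeasure p) c) = c := by
  have hstrict : ∀ z, z < c → cdf (densMeasure p) z < cdf (densMeasure p) c := by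
    intro z hz
    have hd : cdf (densMeasure p) c - cdf (densMeasure p) z = ∫ y in Ioc z c, p y := by
      rw [cdf_sub_cdf hp0 hpm hP hz.le, intervalIntegral.integral_of_le hz.le]
    have hpos : 0 < ∫ y in Ioc z c, p y := by
      -- find a point in (max z (c - δ), c) where p is large
      obtain ⟨δ, hδ, hball⟩ := Metric.eventually_nhds_iff_ball.mp
        ((hpc.tendsto c).eventually_const_lt (half_lt_self hpc2))
      set w := max z (c - δ/2) with hw
      have hwc : w < c := max_lt hz (by linarith)
      set x₀ := (w + c)/2 with hx₀
      have hx₀w : w < x₀ := by rw [hx₀]; linarith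
      have hx₀c : x₀ < c := by rw [hx₀]; linarith
      have hpx₀ : 0 < p x₀ := by
        have : x₀ ∈ Metric.ball c δ := by
          rw [Metric.mem_ball, Real.dist_eq, abs_lt]
          have : c - δ/2 ≤ w := le_max_right _ _
          constructor <;> [linarith; linarith]
        linarith [hball x₀ this]
      exact pos_setIntegral hp0 hpm hpc ⟨lt_of_le_of_lt (le_max_left _ _) hx₀w, hx₀c⟩
        hpx₀ (integrable_p hp0 hpm hP)
    linarith
  apply le_antisymm
  · exact csInf_le ⟨c, fun z hz => by
      by_contra hlt
      exact absurd hz (not_le.mpr (hstrict z (not_le.mp hlt)))⟩ (by simp [mem_setOf_eq])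
  · refine le_csInf ⟨c, by simp [mem_setOf_eq]⟩ fun z hz => ?_
    by_contra hlt
    exact absurd hz (not_le.mpr (hstrict z (not_le.mp hlt)))

include hP in
/-- `F (quantile u) = u` for `u ∈ (0,1)`. -/
lemma cdf_quantile {u : ℝ} (hu : u ∈ Ioo (0:ℝ) 1) :
    cdf (densMeasure p) (quantile (densMeasure p) u) = u := by
  set F := fun x => cdf (densMeasure p) x with hF
  have hFc : Continuous F := continuous_cdf_densMeasure hp0 hpm hP
  have hbot : ∀ᶠ x in atBot, F x < u :=
    (tendsto_cdf_atBot (densMeasure p)).eventually_lt_const hu.1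
  have htop : ∀ᶠ x in atTop, u < F x :=
    (tendsto_cdf_atTop (densMeasure p)).eventually_const_lt hu.2
  obtain ⟨x₀, hx₀⟩ := hbot.exists
  obtain ⟨x₁, hx₁⟩ := (htop.and (eventually_ge_atTop x₀)).exists
  -- the set {x | u ≤ F x}
  have hne : {x : ℝ | u ≤ F x}.Nonempty := ⟨x₁, hx₁.1.le⟩
  have hbdd : BddBelow {x : ℝ | u ≤ F x} := by
    obtain ⟨z₀, hz₀⟩ := (eventually_atBot.mp hbot)
    refine ⟨z₀, fun x hx => ?_⟩
    by_contra hlt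
    have : F x ≤ F z₀ := monotone_cdf _ (le_of_lt (not_le.mp hlt))
    exact absurd hx (not_le.mpr (lt_of_le_of_lt this (hz₀ z₀ le_rfl)))
  have hclosed : IsClosed {x : ℝ | u ≤ F x} := isClosed_le continuous_const hFc
  have hmem : quantile (densMeasure p) u ∈ {x : ℝ | u ≤ F x} := by
    rw [show quantile (densMeasure p) u = sInf {x : ℝ | u ≤ F x} from rfl]
    exact hclosed.csInf_mem hne hbdd
  have hmem2 : u ≤ F (quantile (densMeasure p) u) := hmem
  rcases eq_or_lt_of_le hmem2 with h | h
  · exact h.symm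
  · exfalso
    set q := quantile (densMeasure p) u
    have hx₀q : F x₀ < u := hx₀
    have hx₀lt : x₀ < q := by
      by_contra hge
      have : F q ≤ F x₀ := monotone_cdf _ (not_lt.mp hge)
      exact absurd hmem (not_le.mpr (lt_of_le_of_lt this hx₀q))
    have : u ∈ Icc (F x₀) (F q) := ⟨hx₀q.le, hmem⟩
    obtain ⟨z, hz, hFz⟩ := intermediate_value_Icc hx₀lt.le hFc.continuousOn this
    have hqz : q ≤ z := by
      have : sInf {x : ℝ | u ≤ F x} ≤ z := csInf_le hbdd (show u ≤ F z from hFz.ge)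
      exact this
    have hzq : z = q := le_antisymm hz.2 hqz
    rw [hzq] at hFz
    exact absurd hFz.symm (ne_of_lt h)

omit hpc in
include hp0 hpm in
lemma integral_densMeasure (φ : ℝ → ℝ) (hφ : Measurable φ) :
    ∫ x, φ x ∂(densMeasure p) = ∫ x, p x * φ x := by
  have h1 : densMeasure p = (volume : Measure ℝ).withDensity
      (fun x => ((p x).toNNReal : ENNReal)) := rfl
  have hm : Measurable fun x => (p x).toNNReal := by
    exact measurable_real_toNNReal.comp hpm
  rw [h1, integral_withDensity_eq_integral_smul hm φ]
  congr 1
  funext x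
  simp [NNReal.smul_def, Real.coe_toNNReal _ (hp0 x)]

omit hpc in
include hp0 hpm in
lemma integral_densMeasure_indicator (s : Set ℝ) (hs : MeasurableSet s) :
    ∫ x, p x * s.indicator (fun _ => (1:ℝ)) x = (densMeasure p s).toReal := by
  have h : (fun x => p x * s.indicator (fun _ => (1:ℝ)) x) = s.indicator p := by
    funext x
    by_cases hx : x ∈ s <;> simp [indicator_apply, hx]
  rw [h, integral_indicator hs, densMeasure_toReal hp0 hpm s hs]

omit hp0 hpm hpc in
lemma densMeasure_map (t : ℝ) :
    (densMeasure p).map (fun x => x + t) = densMeasure (fun x => p (x - t)) := by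
  ext s hs
  have hpre : MeasurableSet ((fun x => x + t) ⁻¹' s) := (measurable_add_const t) hs
  rw [Measure.map_apply (measurable_add_const t) hs, densMeasure_apply _ hpre,
    densMeasure_apply _ hs, ← lintegral_indicator hpre, ← lintegral_indicator hs]
  calc ∫⁻ x, ((fun x => x + t) ⁻¹' s).indicator (fun x => ENNReal.ofReal (p x)) x
      = ∫⁻ x, (fun y => s.indicator (fun z => ENNReal.ofReal (p (z - t))) y) (x + t) := by
        congr 1
        funext x
        by_cases hx : x + t ∈ s
        · simp [indicator, hx, mem_preimage]
        · simp [indicator, hx, mem_preimage]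
    _ = ∫⁻ y, s.indicator (fun z => ENNReal.ofReal (p (z - t))) y :=
        lintegral_add_right_eq_self _ t

omit hpc in
include hp0 hpm in
lemma integrable_mul_bdd (f : ℝ → ℝ) (hf : Integrable f volume) (φ : ℝ → ℝ)
    (hφ : Measurable φ) (hφ01 : ∀ x, φ x ∈ Icc (0:ℝ) 1) :
    Integrable (fun x => f x * φ x) volume := by
  have := hf.bdd_mul (c := 1) (g := f) (f := φ) hφ.aestronglyMeasurable
    (Eventually.of_forall fun x => by
      rw [Real.norm_eq_abs, abs_of_nonneg (hφ01 x).1]; exact (hφ01 x).2)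
  simpa [mul_comm] using this

omit hpc in
include hp0 in
/-- Log-concavity gives monotonicity of the shifted likelihood ratio. -/
lemma cross_ineq (hlc : ∀ x y : ℝ, ∀ u ∈ Icc (0:ℝ) 1,
      p x ^ u * p y ^ (1 - u) ≤ p (u * x + (1 - u) * y))
    {u v t : ℝ} (huv : u ≤ v) (ht : 0 < t) :
    p (u - t) * p v ≤ p (v - t) * p u := by
  rcases eq_or_lt_of_le huv with rfl | huv
  · rw [mul_comm]
  rcases eq_or_lt_of_le (hp0 (u - t)) with h0 | hqpos
  · rw [← h0, zero_mul]; exact mul_nonneg (hp0 _) (hp0 _)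
  rcases eq_or_lt_of_le (hp0 v) with h0 | hvpos
  · rw [← h0, mul_zero]; exact mul_nonneg (hp0 _) (hp0 _)
  set lam := (v - u) / (v - u + t) with hlam
  have hden : 0 < v - u + t := by linarith
  have hlam0 : 0 ≤ lam := div_nonneg (by linarith) hden.le
  have hlam1 : lam ≤ 1 := (div_le_one hden).mpr (by linarith)
  have e1 : lam * (u - t) + (1 - lam) * v = u := by
    rw [hlam]; linear_combination -(div_mul_cancel₀ (v - u) hden.ne')
  have e2 : (1 - lam) * (u - t) + (1 - (1 - lam)) * v = v - t := by
    rw [hlam]; linear_combination (div_mul_cancel₀ (v - u) hden.ne')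
  have h1 := hlc (u - t) v lam ⟨hlam0, hlam1⟩
  have h2 := hlc (u - t) v (1 - lam) ⟨by linarith, by linarith⟩
  rw [e1] at h1
  rw [e2] at h2
  have hmul := mul_le_mul h1 h2 (mul_nonneg (Real.rpow_nonneg (hp0 _) _)
    (Real.rpow_nonneg (hp0 _) _)) (hp0 _)
  calc p (u - t) * p v
      = p (u - t) ^ lam * p v ^ (1 - lam) * (p (u - t) ^ (1 - lam) * p v ^ (1 - (1 - lam))) := by
        rw [show (1 : ℝ) - (1 - lam) = lam by ring]
        rw [mul_mul_mul_comm, ← Real.rpow_add hqpos, ← Real.rpow_add hvpos]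
        norm_num
    _ ≤ p u * p (v - t) := hmul
    _ = p (v - t) * p u := mul_comm _ _

include hP in
omit hpc in
lemma total_integral_one : ∫ x, p x = 1 := by
  have h := densMeasure_toReal hp0 hpm univ MeasurableSet.univ
  rw [(measure_univ : densMeasure p univ = 1)] at h
  simpa [Measure.restrict_univ] using h.symm

include hP in
omit hpc in
lemma integral_Ioi_eq (a : ℝ) : ∫ x in Ioi a, p x = 1 - cdf (densMeasure p) a := by
  have h := integral_add_compl (measurableSet_Iic (a := a)) (integrable_p hp0 hpm hP) (f := p)
  rw [compl_Iic] at h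
  rw [cdf_densMeasure hp0 hpm hP]
  rw [total_integral_one hp0 hpm hP] at h
  linarith

include hP in
/-- If `0 < F c < 1` and `p` is log-concave then `p c > 0`. -/
lemma p_pos_of_cdf (hlc : ∀ x y : ℝ, ∀ u ∈ Icc (0:ℝ) 1,
      p x ^ u * p y ^ (1 - u) ≤ p (u * x + (1 - u) * y))
    {c : ℝ} (h0 : 0 < cdf (densMeasure p) c) (h1 : cdf (densMeasure p) c < 1) :
    0 < p c := by
  have hx₁ : ∃ x₁ ≤ c, 0 < p x₁ := by
    by_contra hcon
    push_neg at hcon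
    have hz : ∀ x ∈ Iic c, p x = 0 := fun x hx =>
      le_antisymm (hcon x hx) (hp0 x)
    have : cdf (densMeasure p) c = 0 := by
      rw [cdf_densMeasure hp0 hpm hP]
      rw [setIntegral_congr_fun measurableSet_Iic hz]
      simp
    linarith
  have hx₂ : ∃ x₂, c < x₂ ∧ 0 < p x₂ := by
    by_contra hcon
    push_neg at hcon
    have hz : ∀ x ∈ Ioi c, p x = 0 := fun x hx =>
      le_antisymm (hcon x hx) (hp0 x)
    have : ∫ x in Ioi c, p x = 0 := by
      rw [setIntegral_congr_fun measurableSet_Ioi hz]; simp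
    rw [integral_Ioi_eq hp0 hpm hP] at this
    linarith
  obtain ⟨x₁, hx₁c, hx₁p⟩ := hx₁
  obtain ⟨x₂, hx₂c, hx₂p⟩ := hx₂
  rcases eq_or_lt_of_le hx₁c with rfl | hx₁lt
  · exact hx₁p
  set u := (x₂ - c) / (x₂ - x₁) with hu
  have hd : 0 < x₂ - x₁ := by linarith
  have hu0 : 0 ≤ u := div_nonneg (by linarith) hd.le
  have hu1 : u ≤ 1 := (div_le_one hd).mpr (by linarith)
  have he : u * x₁ + (1 - u) * x₂ = c := by
    rw [hu]; linear_combination -(div_mul_cancel₀ (x₂ - c) hd.ne')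
  have := hlc x₁ x₂ u ⟨hu0, hu1⟩
  rw [he] at this
  exact lt_of_lt_of_le (mul_pos (Real.rpow_pos_of_pos hx₁p _)
    (Real.rpow_pos_of_pos hx₂p _)) this

include hP in
lemma tradeoff_eq_of_logConcave (hlc : ∀ x y : ℝ, ∀ u ∈ Icc (0:ℝ) 1,
      p x ^ u * p y ^ (1 - u) ≤ p (u * x + (1 - u) * y))
    {t : ℝ} (ht : 0 < t) {α : ℝ} (hα : α ∈ Ioo (0:ℝ) 1) :
    tradeoff (densMeasure p) ((densMeasure p).map (fun x => x + t)) α =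
      cdf (densMeasure p) (quantile (densMeasure p) (1 - α) - t) := by
  set c := quantile (densMeasure p) (1 - α) with hc
  have hFc : cdf (densMeasure p) c = 1 - α :=
    cdf_quantile hp0 hpm hpc hP ⟨by linarith [hα.2], by linarith [hα.1]⟩
  have hpcpos : 0 < p c :=
    p_pos_of_cdf hp0 hpm hpc hP hlc (by rw [hFc]; linarith [hα.2]) (by rw [hFc]; linarith [hα.1])
  set q : ℝ → ℝ := fun x => p (x - t) with hqdef
  have hq0 : ∀ x, 0 ≤ q x := fun x => hp0 _
  have hqm : Measurable q := hpm.comp (measurable_id.sub_const t)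
  have hqc : Continuous q := hpc.comp (continuous_sub_right t)
  have hQ : (densMeasure p).map (fun x => x + t) = densMeasure q := densMeasure_map t
  have hQprob : IsProbabilityMeasure (densMeasure q) := by
    rw [← hQ]; exact Measure.isProbabilityMeasure_map (measurable_add_const t).aemeasurable
  have hqint : Integrable q volume := integrable_p hq0 hqm hQprob
  have hpint : Integrable p volume := integrable_p hp0 hpm hP
  -- cdf of the shifted measure
  have cdf_q : ∀ a, cdf (densMeasure q) a = cdf (densMeasure p) (a - t) := by
    intro a
    rw [cdf_eq_real, cdf_eq_real, measureReal_def, measureReal_def, ← hQ,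
      Measure.map_apply (measurable_add_const t) measurableSet_Iic]
    congr 2
    ext x
    simp only [mem_preimage, mem_Iic]
    constructor <;> intro <;> linarith
  -- the likelihood-ratio threshold
  set k := q c / p c with hk
  have hk0 : 0 ≤ k := div_nonneg (hq0 c) (hp0 c)
  have hk1 : ∀ x, x ≤ c → q x ≤ k * p x := by
    intro x hx
    have h := cross_ineq hp0 hpm hlc hx ht
    rw [hk, div_mul_eq_mul_div, le_div_iff₀ hpcpos]
    calc q x * p c = p (x - t) * p c := rfl
      _ ≤ p (c - t) * p x := h
      _ = q c * p x := rfl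
  have hk2 : ∀ x, c < x → k * p x ≤ q x := by
    intro x hx
    have h := cross_ineq hp0 hpm hlc hx.le ht
    rw [hk, div_mul_eq_mul_div, div_le_iff₀ hpcpos]
    calc q c * p x = p (c - t) * p x := rfl
      _ ≤ p (x - t) * p c := h
      _ = q x * p c := rfl
  -- the threshold test
  set ψ : ℝ → ℝ := (Ioi c).indicator (fun _ => (1:ℝ)) with hψdef
  have hψm : Measurable ψ := measurable_const.indicator measurableSet_Ioi
  have hψ01 : ∀ x, ψ x ∈ Icc (0:ℝ) 1 := by
    intro x
    by_cases h : x ∈ Ioi c <;> simp [hψdef, indicator, h]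
  have Iψ : ∫ x, p x * ψ x = 1 - cdf (densMeasure p) c := by
    rw [hψdef, integral_densMeasure_indicator hp0 hpm _ measurableSet_Ioi,
      densMeasure_toReal hp0 hpm _ measurableSet_Ioi, integral_Ioi_eq hp0 hpm hP]
  have Jψ : ∫ x, q x * ψ x = 1 - cdf (densMeasure p) (c - t) := by
    rw [hψdef, integral_densMeasure_indicator hq0 hqm _ measurableSet_Ioi,
      densMeasure_toReal hq0 hqm _ measurableSet_Ioi, integral_Ioi_eq hq0 hqm hQprob,
      cdf_q]
  -- lower bound for every test
  have hlb : ∀ β ∈ { β : ℝ | ∃ φ : ℝ → ℝ, Measurable φ ∧ (∀ ω, φ ω ∈ Icc (0:ℝ) 1) ∧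
      (∫ ω, φ ω ∂(densMeasure p)) ≤ α ∧
      β = 1 - ∫ ω, φ ω ∂((densMeasure p).map (fun x => x + t)) },
      cdf (densMeasure p) (c - t) ≤ β := by
    rintro β ⟨φ, hφm, hφ01, hφlev, rfl⟩
    rw [integral_densMeasure hp0 hpm φ hφm] at hφlev
    rw [hQ, integral_densMeasure hq0 hqm φ hφm]
    have ipφ : Integrable (fun x => p x * φ x) volume :=
      integrable_mul_bdd hp0 hpm p hpint φ hφm hφ01
    have iqφ : Integrable (fun x => q x * φ x) volume :=
      integrable_mul_bdd hp0 hpm q hqint φ hφm hφ01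
    have ipψ : Integrable (fun x => p x * ψ x) volume :=
      integrable_mul_bdd hp0 hpm p hpint ψ hψm hψ01
    have iqψ : Integrable (fun x => q x * ψ x) volume :=
      integrable_mul_bdd hp0 hpm q hqint ψ hψm hψ01
    have hg0 : ∀ x, 0 ≤ (ψ x - φ x) * (q x - k * p x) := by
      intro x
      rcases le_or_gt x c with hx | hx
      · have hψx : ψ x = 0 := indicator_of_notMem (by simp [mem_Ioi]; exact hx) _
        rw [hψx]
        calc (0:ℝ) ≤ φ x * (k * p x - q x) :=
              mul_nonneg (hφ01 x).1 (sub_nonneg.mpr (hk1 x hx))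
          _ = (0 - φ x) * (q x - k * p x) := by ring
      · have hψx : ψ x = 1 := indicator_of_mem hx _
        rw [hψx]
        exact mul_nonneg (by linarith [(hφ01 x).2]) (sub_nonneg.mpr (hk2 x hx))
    have hgint : 0 ≤ ∫ x, (ψ x - φ x) * (q x - k * p x) := integral_nonneg hg0
    have hsplit : ∫ x, (ψ x - φ x) * (q x - k * p x) =
        ((∫ x, q x * ψ x) - (∫ x, q x * φ x)) -
          (k * (∫ x, p x * ψ x) - k * (∫ x, p x * φ x)) := by
      have e : (fun x => (ψ x - φ x) * (q x - k * p x)) =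
          fun x => (q x * ψ x - q x * φ x) - (k * (p x * ψ x) - k * (p x * φ x)) := by
        funext x; ring
      have ikψ : Integrable (fun x => k * (p x * ψ x)) volume := ipψ.const_mul k
      have ikφ : Integrable (fun x => k * (p x * φ x)) volume := ipφ.const_mul k
      have i1 : Integrable (fun x => q x * ψ x - q x * φ x) volume := iqψ.sub iqφ
      have i2 : Integrable (fun x => k * (p x * ψ x) - k * (p x * φ x)) volume :=
        ikψ.sub ikφ
      rw [e, integral_sub i1 i2, integral_sub iqψ iqφ, integral_sub ikψ ikφ,
        MeasureTheory.integral_const_mul, MeasureTheory.integral_const_mul]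
    rw [hsplit, Iψ, Jψ, hFc] at hgint
    have hkmul : k * (∫ x, p x * φ x) ≤ k * α :=
      mul_le_mul_of_nonneg_left hφlev hk0
    linarith
  have hmem : cdf (densMeasure p) (c - t) ∈ { β : ℝ | ∃ φ : ℝ → ℝ, Measurable φ ∧
      (∀ ω, φ ω ∈ Icc (0:ℝ) 1) ∧ (∫ ω, φ ω ∂(densMeasure p)) ≤ α ∧
      β = 1 - ∫ ω, φ ω ∂((densMeasure p).map (fun x => x + t)) } := by
    refine ⟨ψ, hψm, hψ01, ?_, ?_⟩
    · rw [integral_densMeasure hp0 hpm ψ hψm, Iψ, hFc]; linarith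
    · rw [hQ, integral_densMeasure hq0 hqm ψ hψm, Jψ]; ring
  rw [tradeoff]
  exact le_antisymm (csInf_le ⟨_, hlb⟩ hmem) (le_csInf ⟨_, hmem⟩ hlb)

omit hp0 hpm hpc in
lemma tendsto_avg {f : ℝ → ℝ} (hfi : Integrable f volume) (hfc : Continuous f) (z : ℝ) :
    Tendsto (fun δ : ℝ => (∫ x in Ioc z (z + δ), f x) / δ) (nhdsWithin 0 (Ioi 0))
      (nhds (f z)) := by
  set K : ℝ → ℝ := fun s => ∫ x in (0:ℝ)..s, f x with hK
  have hd : HasDerivAt K (f z) z :=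
    intervalIntegral.integral_hasDerivAt_right hfi.intervalIntegrable
      hfc.stronglyMeasurable.stronglyMeasurableAtFilter hfc.continuousAt
  have hslope := hasDerivAt_iff_tendsto_slope.mp hd
  have hmap : Tendsto (fun δ : ℝ => z + δ) (nhdsWithin 0 (Ioi 0))
      (nhdsWithin z {z}ᶜ) := by
    apply tendsto_nhdsWithin_of_tendsto_nhds_of_eventually_within
    · have : Tendsto (fun δ : ℝ => z + δ) (nhds 0) (nhds (z + 0)) :=
        (continuous_const.add continuous_id).tendsto 0
      rw [add_zero] at this
      exact this.mono_left nhdsWithin_le_nhds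
    · filter_upwards [self_mem_nhdsWithin] with δ (hδ : δ ∈ Ioi (0:ℝ))
      simp only [mem_compl_iff, mem_singleton_iff]
      intro h
      have hδ0 : δ = 0 := by linarith
      simp only [mem_Ioi] at hδ
      exact absurd hδ0 (ne_of_gt hδ)
  have hcomp := hslope.comp hmap
  have heq : ∀ᶠ δ in nhdsWithin (0:ℝ) (Ioi 0),
      (slope K z ∘ fun δ => z + δ) δ = (∫ x in Ioc z (z + δ), f x) / δ := by
    filter_upwards [self_mem_nhdsWithin] with δ (hδ : δ ∈ Ioi (0:ℝ))
    have hzz : z ≤ z + δ := by simp at hδ; linarith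
    have : K (z + δ) - K z = ∫ x in Ioc z (z + δ), f x := by
      rw [hK]
      rw [intervalIntegral.integral_interval_sub_left hfi.intervalIntegrable
        hfi.intervalIntegrable, intervalIntegral.integral_of_le hzz]
    have hden : z + δ - z = δ := by ring
    simp only [Function.comp_apply, slope_def_field, hden, this]
  exact Tendsto.congr' heq hcomp

omit hp0 hpm hpc in
lemma shift_prob (hP : IsProbabilityMeasure (densMeasure p)) (t : ℝ) :
    IsProbabilityMeasure (densMeasure (fun x => p (x - t))) := by
  rw [← densMeasure_map t]
  exact Measure.isProbabilityMeasure_map (measurable_add_const t).aemeasurable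

omit hpc in
include hP in
lemma cdf_shift (t a : ℝ) :
    cdf (densMeasure (fun x => p (x - t))) a = cdf (densMeasure p) (a - t) := by
  haveI := shift_prob hP t
  rw [cdf_eq_real, cdf_eq_real, measureReal_def, measureReal_def, ← densMeasure_map t,
    Measure.map_apply (measurable_add_const t) measurableSet_Iic]
  congr 2
  ext x
  simp only [mem_preimage, mem_Iic]
  constructor <;> intro <;> linarith

omit hp0 hpm hpc in
lemma indicator_mem_Icc (s : Set ℝ) (x : ℝ) :
    s.indicator (fun _ => (1:ℝ)) x ∈ Icc (0:ℝ) 1 := by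
  by_cases h : x ∈ s
  · rw [indicator_of_mem h]; exact ⟨zero_le_one, le_refl 1⟩
  · rw [indicator_of_notMem h]; exact ⟨le_refl 0, zero_le_one⟩

omit hpc in
include hP in
lemma tradeoff_set_bddBelow (t : ℝ) (α : ℝ) :
    BddBelow { β : ℝ | ∃ φ : ℝ → ℝ, Measurable φ ∧ (∀ ω, φ ω ∈ Icc (0:ℝ) 1) ∧
      (∫ ω, φ ω ∂(densMeasure p)) ≤ α ∧
      β = 1 - ∫ ω, φ ω ∂((densMeasure p).map (fun x => x + t)) } := by
  refine ⟨0, ?_⟩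
  rintro β ⟨φ, hφm, hφ01, -, rfl⟩
  set q : ℝ → ℝ := fun x => p (x - t) with hq
  have hq0 : ∀ x, 0 ≤ q x := fun x => hp0 _
  have hqm : Measurable q := hpm.comp (measurable_id.sub_const t)
  haveI hQprob := shift_prob hP t
  have hqint : Integrable q volume := integrable_p hq0 hqm hQprob
  rw [densMeasure_map t, integral_densMeasure hq0 hqm φ hφm]
  have h1 : ∫ x, q x * φ x ≤ ∫ x, q x := by
    apply integral_mono (integrable_mul_bdd hp0 hpm q hqint φ hφm hφ01) hqint
    intro x
    calc q x * φ x ≤ q x * 1 := mul_le_mul_of_nonneg_left (hφ01 x).2 (hq0 x)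
      _ = q x := mul_one _
  rw [total_integral_one hq0 hqm hQprob] at h1
  linarith

include hP in
/-- The master lemma: the tradeoff identity forces monotonicity of the shifted
likelihood ratio across any point `c` where `p` is positive. -/
lemma master (hform : ∀ t : ℝ, 0 < t → ∀ α ∈ Ioo (0:ℝ) 1,
      tradeoff (densMeasure p) ((densMeasure p).map (fun x => x + t)) α =
        cdf (densMeasure p) (quantile (densMeasure p) (1 - α) - t))
    {t x1 c x2 : ℝ} (ht : 0 < t) (h1 : x1 < c) (h2 : c < x2)
    (hpc2 : 0 < p c) (hpx2 : 0 < p x2) :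
    p (x1 - t) * p x2 ≤ p (x2 - t) * p x1 := by
  set q : ℝ → ℝ := fun x => p (x - t) with hqdef
  have hq0 : ∀ x, 0 ≤ q x := fun x => hp0 _
  have hqm : Measurable q := hpm.comp (measurable_id.sub_const t)
  have hqc : Continuous q := hpc.comp (continuous_sub_right t)
  haveI hQprob := shift_prob hP t
  have hqint : Integrable q volume := integrable_p hq0 hqm hQprob
  have hpint : Integrable p volume := integrable_p hp0 hpm hP
  -- `F c` is strictly between 0 and 1
  have hFcpos : 0 < cdf (densMeasure p) c := by
    obtain ⟨δ, hδ, hball⟩ := Metric.eventually_nhds_iff_ball.mp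
      ((hpc.tendsto c).eventually_const_lt (half_lt_self hpc2))
    have hx₀mem : c - δ/2 ∈ Ioo (c - δ) c := ⟨by linarith, by linarith⟩
    have hpx₀ : 0 < p (c - δ/2) := by
      have : c - δ/2 ∈ Metric.ball c δ := by
        rw [Metric.mem_ball, Real.dist_eq, abs_lt]; constructor <;> linarith
      linarith [hball _ this]
    have hpos := pos_setIntegral hp0 hpm hpc hx₀mem hpx₀ hpint
    have heq : cdf (densMeasure p) c - cdf (densMeasure p) (c - δ) =
        ∫ x in Ioc (c - δ) c, p x := by
      rw [cdf_sub_cdf hp0 hpm hP (by linarith), intervalIntegral.integral_of_le (by linarith)]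
    linarith [cdf_nonneg (densMeasure p) (c - δ)]
  have hFclt : cdf (densMeasure p) c < 1 := by
    have hpos := pos_setIntegral hp0 hpm hpc (show x2 ∈ Ioo c (x2+1) from ⟨h2, by linarith⟩)
      hpx2 hpint
    have heq : cdf (densMeasure p) (x2+1) - cdf (densMeasure p) c =
        ∫ x in Ioc c (x2+1), p x := by
      rw [cdf_sub_cdf hp0 hpm hP (by linarith), intervalIntegral.integral_of_le (by linarith)]
    linarith [cdf_le_one (densMeasure p) (x2+1)]
  set α := 1 - cdf (densMeasure p) c with hαdef
  have hαIoo : α ∈ Ioo (0:ℝ) 1 := ⟨by rw [hαdef]; linarith, by rw [hαdef]; linarith⟩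
  have hquant : quantile (densMeasure p) (1 - α) = c := by
    rw [hαdef, sub_sub_cancel]
    exact quantile_cdf_self hp0 hpm hpc hP hpc2
  have hform' := hform t ht α hαIoo
  rw [hquant] at hform'
  -- expansion of integrals against the perturbed test
  have hcore : ∀ δ δ₀ : ℝ, 0 < δ → x1 + δ ≤ c → 0 < δ₀ →
      0 < (∫ x in Ioc x2 (x2+δ₀), p x) →
      (∫ x in Ioc x1 (x1+δ), p x) ≤ (∫ x in Ioc x2 (x2+δ₀), p x) →
      (∫ x in Ioc x1 (x1+δ), q x) * (∫ x in Ioc x2 (x2+δ₀), p x) ≤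
        (∫ x in Ioc x1 (x1+δ), p x) * (∫ x in Ioc x2 (x2+δ₀), q x) := by
    intro δ δ₀ hδ hδc hδ₀ hPB hPAB
    set PA := ∫ x in Ioc x1 (x1+δ), p x with hPAdef
    set PB := ∫ x in Ioc x2 (x2+δ₀), p x with hPBdef
    set QA := ∫ x in Ioc x1 (x1+δ), q x with hQAdef
    set QB := ∫ x in Ioc x2 (x2+δ₀), q x with hQBdef
    set θ := PA / PB with hθdef
    have hPA0 : 0 ≤ PA := setIntegral_nonneg measurableSet_Ioc fun x _ => hp0 x
    have hθ0 : 0 ≤ θ := div_nonneg hPA0 hPB.le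
    have hθ1 : θ ≤ 1 := (div_le_one hPB).mpr hPAB
    set φ : ℝ → ℝ := fun x => (Ioi c).indicator (fun _ => (1:ℝ)) x -
        θ * (Ioc x2 (x2+δ₀)).indicator (fun _ => (1:ℝ)) x +
        (Ioc x1 (x1+δ)).indicator (fun _ => (1:ℝ)) x with hφdef
    have hφm : Measurable φ :=
      ((measurable_const.indicator measurableSet_Ioi).sub
        ((measurable_const.indicator measurableSet_Ioc).const_mul θ)).add
        (measurable_const.indicator measurableSet_Ioc)
    have hφ01 : ∀ x, φ x ∈ Icc (0:ℝ) 1 := by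
      intro x
      rw [hφdef]
      by_cases hA : x ∈ Ioc x1 (x1+δ)
      · have hxc : x ≤ c := le_trans hA.2 hδc
        have hnC : x ∉ Ioi c := by simpa [mem_Ioi] using hxc
        have hnB : x ∉ Ioc x2 (x2+δ₀) := fun hB => absurd hxc (not_le.mpr (h2.trans hB.1))
        simp only [indicator_of_mem hA, indicator_of_notMem hnC, indicator_of_notMem hnB]
        norm_num
      · by_cases hB : x ∈ Ioc x2 (x2+δ₀)
        · have hC : x ∈ Ioi c := mem_Ioi.mpr (h2.trans hB.1)
          simp only [indicator_of_mem hB, indicator_of_mem hC, indicator_of_notMem hA]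
          rw [mem_Icc]
          constructor <;> nlinarith [hθ0, hθ1]
        · by_cases hC : x ∈ Ioi c
          · simp only [indicator_of_mem hC, indicator_of_notMem hA, indicator_of_notMem hB]
            norm_num
          · simp only [indicator_of_notMem hC, indicator_of_notMem hA,
              indicator_of_notMem hB]
            norm_num
    have hexp : ∀ (f : ℝ → ℝ), (∀ x, 0 ≤ f x) → Measurable f → Integrable f volume →
        ∫ x, f x * φ x = (∫ x in Ioi c, f x) - θ * (∫ x in Ioc x2 (x2+δ₀), f x) +
          (∫ x in Ioc x1 (x1+δ), f x) := by
      intro f hf0 hfm hfi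
      have i1 : Integrable (fun x => f x * (Ioi c).indicator (fun _ => (1:ℝ)) x) volume :=
        integrable_mul_bdd hp0 hpm f hfi _ (measurable_const.indicator measurableSet_Ioi)
          (indicator_mem_Icc _)
      have i2 : Integrable (fun x => f x * (Ioc x2 (x2+δ₀)).indicator (fun _ => (1:ℝ)) x)
          volume := integrable_mul_bdd hp0 hpm f hfi _
          (measurable_const.indicator measurableSet_Ioc) (indicator_mem_Icc _)
      have i3 : Integrable (fun x => f x * (Ioc x1 (x1+δ)).indicator (fun _ => (1:ℝ)) x)
          volume := integrable_mul_bdd hp0 hpm f hfi _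
          (measurable_const.indicator measurableSet_Ioc) (indicator_mem_Icc _)
      have i2' : Integrable (fun x => θ * (f x * (Ioc x2 (x2+δ₀)).indicator
          (fun _ => (1:ℝ)) x)) volume := i2.const_mul θ
      have e : (fun x => f x * φ x) = fun x =>
          (f x * (Ioi c).indicator (fun _ => (1:ℝ)) x -
            θ * (f x * (Ioc x2 (x2+δ₀)).indicator (fun _ => (1:ℝ)) x)) +
          f x * (Ioc x1 (x1+δ)).indicator (fun _ => (1:ℝ)) x := by
        funext x; rw [hφdef]; ring
      have i12 : Integrable (fun x => f x * (Ioi c).indicator (fun _ => (1:ℝ)) x -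
          θ * (f x * (Ioc x2 (x2+δ₀)).indicator (fun _ => (1:ℝ)) x)) volume := i1.sub i2'
      rw [e, integral_add i12 i3, integral_sub i1 i2', MeasureTheory.integral_const_mul]
      rw [integral_densMeasure_indicator hf0 hfm _ measurableSet_Ioi,
        densMeasure_toReal hf0 hfm _ measurableSet_Ioi,
        integral_densMeasure_indicator hf0 hfm _ measurableSet_Ioc,
        densMeasure_toReal hf0 hfm _ measurableSet_Ioc,
        integral_densMeasure_indicator hf0 hfm _ measurableSet_Ioc,
        densMeasure_toReal hf0 hfm _ measurableSet_Ioc]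
    have hθPB : θ * PB = PA := div_mul_cancel₀ PA (ne_of_gt hPB)
    have hlev : ∫ x, p x * φ x ≤ α := by
      rw [hexp p hp0 hpm hpint, integral_Ioi_eq hp0 hpm hP, ← hPBdef, ← hPAdef, hθPB,
        hαdef]
      linarith
    have hβmem : (1 - ∫ ω, φ ω ∂((densMeasure p).map (fun x => x + t))) ∈
        { β : ℝ | ∃ ψ : ℝ → ℝ, Measurable ψ ∧ (∀ ω, ψ ω ∈ Icc (0:ℝ) 1) ∧
          (∫ ω, ψ ω ∂(densMeasure p)) ≤ α ∧
          β = 1 - ∫ ω, ψ ω ∂((densMeasure p).map (fun x => x + t)) } :=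
      ⟨φ, hφm, hφ01, by rw [integral_densMeasure hp0 hpm φ hφm]; exact hlev, rfl⟩
    have hle : cdf (densMeasure p) (c - t) ≤
        1 - ∫ ω, φ ω ∂((densMeasure p).map (fun x => x + t)) := by
      rw [← hform']
      exact csInf_le (tradeoff_set_bddBelow hp0 hpm hP t α) hβmem
    rw [densMeasure_map t, integral_densMeasure hq0 hqm φ hφm,
      hexp q hq0 hqm hqint, integral_Ioi_eq hq0 hqm hQprob, cdf_shift hp0 hpm hP,
      ← hQBdef, ← hQAdef] at hle
    -- hle : F(c-t) ≤ 1 - ((1 - F(c-t)) - θ QB + QA)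
    have hQAθ : QA ≤ θ * QB := by linarith
    calc QA * PB ≤ θ * QB * PB := mul_le_mul_of_nonneg_right hQAθ hPB.le
      _ = PA * QB := by rw [hθdef]; field_simp
  -- first limit: δ → 0⁺
  have hclaim1 : ∀ δ₀ : ℝ, 0 < δ₀ → 0 < (∫ x in Ioc x2 (x2+δ₀), p x) →
      q x1 * (∫ x in Ioc x2 (x2+δ₀), p x) ≤ p x1 * (∫ x in Ioc x2 (x2+δ₀), q x) := by
    intro δ₀ hδ₀ hPB
    set PB := ∫ x in Ioc x2 (x2+δ₀), p x with hPBdef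
    set QB := ∫ x in Ioc x2 (x2+δ₀), q x with hQBdef
    have hQA := tendsto_avg hqint hqc x1
    have hPA := tendsto_avg hpint hpc x1
    have hPAzero : Tendsto (fun δ : ℝ => ∫ x in Ioc x1 (x1+δ), p x)
        (nhdsWithin 0 (Ioi 0)) (nhds 0) := by
      have hid : Tendsto (fun δ : ℝ => δ) (nhdsWithin (0:ℝ) (Ioi 0)) (nhds 0) :=
        tendsto_id.mono_right nhdsWithin_le_nhds
      have := hPA.mul hid
      rw [mul_zero] at this
      apply this.congr'
      filter_upwards [self_mem_nhdsWithin] with δ (hδ : δ ∈ Ioi (0:ℝ))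
      rw [div_mul_cancel₀ _ (ne_of_gt (mem_Ioi.mp hδ))]
    refine le_of_tendsto_of_tendsto (hQA.mul_const PB) (hPA.mul_const QB) ?_
    filter_upwards [self_mem_nhdsWithin,
      eventually_of_mem (nhdsWithin_le_nhds (Iio_mem_nhds (by linarith : (0:ℝ) < c - x1)))
        (fun δ hδ => hδ),
      hPAzero.eventually_lt_const hPB] with δ hδpos hδlt hPAlt
    have hδpos' : (0:ℝ) < δ := mem_Ioi.mp hδpos
    have hδlt' : δ < c - x1 := hδlt
    have h := hcore δ δ₀ hδpos' (by linarith) hδ₀ hPB hPAlt.le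
    rw [div_mul_eq_mul_div, div_mul_eq_mul_div]
    exact (div_le_div_iff_of_pos_right hδpos').mpr h
  -- second limit: δ₀ → 0⁺
  have hQB := tendsto_avg hqint hqc x2
  have hPB := tendsto_avg hpint hpc x2
  have hfinal : q x1 * p x2 ≤ p x1 * q x2 := by
    refine le_of_tendsto_of_tendsto ((hPB.const_mul (q x1))) ((hQB.const_mul (p x1))) ?_
    filter_upwards [self_mem_nhdsWithin,
      hPB.eventually_const_lt (half_lt_self hpx2)] with δ₀ hδ₀pos hPBpos
    have hδ₀' : (0:ℝ) < δ₀ := mem_Ioi.mp hδ₀pos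
    have hPBpos' : 0 < ∫ x in Ioc x2 (x2+δ₀), p x := by
      have h2' : 0 < (∫ x in Ioc x2 (x2+δ₀), p x) / δ₀ := lt_trans (half_pos hpx2) hPBpos
      have := mul_pos h2' hδ₀'
      rwa [div_mul_cancel₀ _ (ne_of_gt hδ₀')] at this
    have h := hclaim1 δ₀ hδ₀' hPBpos'
    rw [← mul_div_assoc, ← mul_div_assoc]
    exact (div_le_div_iff_of_pos_right hδ₀').mpr h
  calc p (x1 - t) * p x2 = q x1 * p x2 := rfl
    _ ≤ p x1 * q x2 := hfinal
    _ = p (x2 - t) * p x1 := by rw [hqdef]; ring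

include hP in
/-- Under the tradeoff identity, the positivity set of `p` is convex. -/
lemma support_convex (hform : ∀ t : ℝ, 0 < t → ∀ α ∈ Ioo (0:ℝ) 1,
      tradeoff (densMeasure p) ((densMeasure p).map (fun x => x + t)) α =
        cdf (densMeasure p) (quantile (densMeasure p) (1 - α) - t))
    {x m y : ℝ} (hxm : x < m) (hmy : m < y) (hpx : 0 < p x) (hpy : 0 < p y) :
    0 < p m := by
  by_contra h0
  have hpm0 : p m = 0 := le_antisymm (not_lt.mp h0) (hp0 m)
  -- a positivity point strictly between m and y
  obtain ⟨δ, hδ, hball⟩ := Metric.eventually_nhds_iff_ball.mp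
    ((hpc.tendsto y).eventually_const_lt (half_lt_self hpy))
  set c := y - min δ (y - m) / 2 with hcdef
  have hmin : 0 < min δ (y - m) := lt_min hδ (by linarith)
  have hcm : m < c := by
    have : min δ (y - m) ≤ y - m := min_le_right _ _
    rw [hcdef]; linarith
  have hcy : c < y := by rw [hcdef]; linarith
  have hpcpos : 0 < p c := by
    have : c ∈ Metric.ball y δ := by
      rw [Metric.mem_ball, Real.dist_eq, abs_lt]
      have h1' : min δ (y - m) ≤ δ := min_le_left _ _
      have hcv : c - y = -(min δ (y - m) / 2) := by rw [hcdef]; ring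
      rw [hcv]
      constructor <;> linarith
    linarith [hball c this]
  have hmaster := master hp0 hpm hpc hP hform (show (0:ℝ) < m - x by linarith) hcm hcy
    hpcpos hpy
  have e1 : m - (m - x) = x := by ring
  rw [e1, hpm0, mul_zero] at hmaster
  exact absurd hmaster (not_le.mpr (mul_pos hpx hpy))

include hP in
lemma ratio_mono (hform : ∀ t : ℝ, 0 < t → ∀ α ∈ Ioo (0:ℝ) 1,
      tradeoff (densMeasure p) ((densMeasure p).map (fun x => x + t)) α =
        cdf (densMeasure p) (quantile (densMeasure p) (1 - α) - t))
    {t x1 x2 : ℝ} (ht : 0 < t) (hx : x1 < x2) (hp1 : 0 < p x1) (hp2 : 0 < p x2) :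
    p (x1 - t) * p x2 ≤ p (x2 - t) * p x1 := by
  have hc : 0 < p ((x1 + x2)/2) :=
    support_convex hp0 hpm hpc hP hform (by linarith) (by linarith) hp1 hp2
  exact master hp0 hpm hpc hP hform ht (by linarith) (by linarith) hc hp2

include hP in
/-- The multiplicative midpoint inequality. -/
lemma midpoint_ineq (hform : ∀ t : ℝ, 0 < t → ∀ α ∈ Ioo (0:ℝ) 1,
      tradeoff (densMeasure p) ((densMeasure p).map (fun x => x + t)) α =
        cdf (densMeasure p) (quantile (densMeasure p) (1 - α) - t))
    {x y : ℝ} (hxy : x < y) (hpx : 0 < p x) (hpy : 0 < p y)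
    {a b : ℝ} (ha : a ∈ Icc x y) (hb : b ∈ Icc x y) :
    p a * p b ≤ p ((a + b)/2) ^ 2 := by
  have key : ∀ a b : ℝ, a ∈ Icc x y → b ∈ Icc x y → a ≤ b →
      p a * p b ≤ p ((a + b)/2) ^ 2 := by
    intro a b ha hb hab
    rcases eq_or_lt_of_le hab with rfl | hab
    · have : (a + a)/2 = a := by ring
      rw [this, sq]
    · set m := (a + b)/2 with hmdef
      have hma : a < m := by rw [hmdef]; linarith
      have hmb : m < b := by rw [hmdef]; linarith
      have hpmid : 0 < p m := by
        apply support_convex hp0 hpm hpc hP hform (show x < m from lt_of_le_of_lt ha.1 hma)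
          (show m < y from lt_of_lt_of_le hmb hb.2) hpx hpy
      have hpb : 0 < p b := by
        rcases eq_or_lt_of_le hb.2 with rfl | hby
        · exact hpy
        · exact support_convex hp0 hpm hpc hP hform
            (show x < b from lt_of_le_of_lt ha.1 hab) hby hpx hpy
      have hr := ratio_mono hp0 hpm hpc hP hform (show (0:ℝ) < m - a by linarith)
        hmb hpmid hpb
      have e1 : m - (m - a) = a := by ring
      have e2 : b - (m - a) = m := by rw [hmdef]; ring
      rw [e1, e2] at hr
      calc p a * p b ≤ p m * p m := by linarith
        _ = p m ^ 2 := (sq (p m)).symm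
  rcases le_total a b with hab | hab
  · exact key a b ha hb hab
  · have := key b a hb ha hab
    have e : (b + a)/2 = (a + b)/2 := by ring
    rw [e] at this
    linarith [this]

omit hp0 hpm hpc in
/-- A closed set containing `0` and `1` and stable under midpoints contains `[0,1]`. -/
lemma midpoint_dense {U : Set ℝ} (h0 : (0:ℝ) ∈ U) (h1 : (1:ℝ) ∈ U) (hc : IsClosed U)
    (hm : ∀ u ∈ U, ∀ v ∈ U, (u + v)/2 ∈ U) {u : ℝ} (hu : u ∈ Icc (0:ℝ) 1) : u ∈ U := by
  set A := U ∩ Iic u with hA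
  set B := U ∩ Ici u with hB
  have hAne : A.Nonempty := ⟨0, h0, hu.1⟩
  have hBne : B.Nonempty := ⟨1, h1, hu.2⟩
  have hAbdd : BddAbove A := ⟨u, fun z hz => hz.2⟩
  have hBbdd : BddBelow B := ⟨u, fun z hz => hz.2⟩
  have haA : sSup A ∈ A := (hc.inter isClosed_Iic).csSup_mem hAne hAbdd
  have hbB : sInf B ∈ B := (hc.inter isClosed_Ici).csInf_mem hBne hBbdd
  set a := sSup A
  set b := sInf B
  have hau : a ≤ u := haA.2
  have hub : u ≤ b := hbB.2
  have hcU : (a + b)/2 ∈ U := hm a haA.1 b hbB.1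
  rcases le_total ((a + b)/2) u with hcu | hcu
  · have : (a + b)/2 ≤ a := le_csSup hAbdd ⟨hcU, hcu⟩
    have hba : b ≤ a := by linarith
    have : u = a := le_antisymm (by linarith) hau
    rw [this]; exact haA.1
  · have : b ≤ (a + b)/2 := csInf_le hBbdd ⟨hcU, hcu⟩
    have hba : b ≤ a := by linarith
    have : u = b := le_antisymm hub (by linarith)
    rw [this]; exact hbB.1

include hP in
/-- The tradeoff identity implies log-concavity. -/
lemma logconcave_of_form (hform : ∀ t : ℝ, 0 < t → ∀ α ∈ Ioo (0:ℝ) 1,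
      tradeoff (densMeasure p) ((densMeasure p).map (fun x => x + t)) α =
        cdf (densMeasure p) (quantile (densMeasure p) (1 - α) - t)) :
    ∀ x y : ℝ, ∀ u ∈ Icc (0:ℝ) 1,
      p x ^ u * p y ^ (1 - u) ≤ p (u * x + (1 - u) * y) := by
  -- the main case: `x < y` with positive densities
  have main : ∀ x y : ℝ, x < y → 0 < p x → 0 < p y → ∀ u ∈ Icc (0:ℝ) 1,
      p x ^ u * p y ^ (1 - u) ≤ p (u * x + (1 - u) * y) := by
    intro x y hxy hpx hpy
    set U : Set ℝ := Icc (0:ℝ) 1 ∩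
      {u : ℝ | p x ^ u * p y ^ (1 - u) ≤ p (u * x + (1 - u) * y)} with hUdef
    have hUsub : ∀ u ∈ Icc (0:ℝ) 1, u ∈ U → p x ^ u * p y ^ (1 - u) ≤
        p (u * x + (1 - u) * y) := fun u _ hu => hu.2
    have h0U : (0:ℝ) ∈ U := by
      constructor
      · exact ⟨le_refl 0, zero_le_one⟩
      · show p x ^ (0:ℝ) * p y ^ (1 - (0:ℝ)) ≤ p ((0:ℝ) * x + (1 - (0:ℝ)) * y)
        rw [Real.rpow_zero, sub_zero, Real.rpow_one]
        norm_num
    have h1U : (1:ℝ) ∈ U := by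
      constructor
      · exact ⟨zero_le_one, le_refl 1⟩
      · show p x ^ (1:ℝ) * p y ^ (1 - (1:ℝ)) ≤ p ((1:ℝ) * x + (1 - (1:ℝ)) * y)
        rw [Real.rpow_one, sub_self, Real.rpow_zero]
        norm_num
    have hUclosed : IsClosed U := by
      apply IsClosed.inter isClosed_Icc
      have he : {u : ℝ | p x ^ u * p y ^ (1 - u) ≤ p (u * x + (1 - u) * y)} =
          {u : ℝ | Real.exp (Real.log (p x) * u) * Real.exp (Real.log (p y) * (1 - u)) ≤
            p (u * x + (1 - u) * y)} := by
        ext u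
        simp only [mem_setOf_eq, Real.rpow_def_of_pos hpx, Real.rpow_def_of_pos hpy]
      rw [he]
      apply isClosed_le
      · exact ((Real.continuous_exp.comp (continuous_const.mul continuous_id)).mul
          (Real.continuous_exp.comp (continuous_const.mul
            (continuous_const.sub continuous_id))))
      · exact hpc.comp ((continuous_id.mul continuous_const).add
          ((continuous_const.sub continuous_id).mul continuous_const))
    have hUmid : ∀ u ∈ U, ∀ v ∈ U, (u + v)/2 ∈ U := by
      intro u hu v hv
      have huI := hu.1
      have hvI := hv.1
      have hwI : (u + v)/2 ∈ Icc (0:ℝ) 1 :=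
        ⟨by linarith [huI.1, hvI.1], by linarith [huI.2, hvI.2]⟩
      refine ⟨hwI, ?_⟩
      set a := u * x + (1 - u) * y with hadef
      set b := v * x + (1 - v) * y with hbdef
      have haI : a ∈ Icc x y := by
        constructor
        · rw [hadef]; nlinarith [huI.1, huI.2]
        · rw [hadef]; nlinarith [huI.1, huI.2]
      have hbI : b ∈ Icc x y := by
        constructor
        · rw [hbdef]; nlinarith [hvI.1, hvI.2]
        · rw [hbdef]; nlinarith [hvI.1, hvI.2]
      have hkey := midpoint_ineq hp0 hpm hpc hP hform hxy hpx hpy haI hbI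
      have hmeq : (a + b)/2 = ((u + v)/2) * x + (1 - (u + v)/2) * y := by
        rw [hadef, hbdef]; ring
      rw [hmeq] at hkey
      show p x ^ ((u + v)/2) * p y ^ (1 - (u + v)/2) ≤
        p (((u + v)/2) * x + (1 - (u + v)/2) * y)
      have hsq : (p x ^ ((u + v)/2) * p y ^ (1 - (u + v)/2)) ^ 2 =
          (p x ^ u * p y ^ (1 - u)) * (p x ^ v * p y ^ (1 - v)) := by
        rw [mul_pow, sq, sq, ← Real.rpow_add hpx, ← Real.rpow_add hpy]
        rw [show (u + v)/2 + (u + v)/2 = u + v by ring,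
          show (1 - (u + v)/2) + (1 - (u + v)/2) = (1 - u) + (1 - v) by ring,
          Real.rpow_add hpx, Real.rpow_add hpy]
        ring
      have hchain : (p x ^ ((u + v)/2) * p y ^ (1 - (u + v)/2)) ^ 2 ≤
          p (((u + v)/2) * x + (1 - (u + v)/2) * y) ^ 2 := by
        rw [hsq]
        calc (p x ^ u * p y ^ (1 - u)) * (p x ^ v * p y ^ (1 - v)) ≤ p a * p b := by
              apply mul_le_mul hu.2 hv.2
                (mul_nonneg (Real.rpow_nonneg (hp0 x) _) (Real.rpow_nonneg (hp0 y) _))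
                (hp0 a)
          _ ≤ _ := hkey
      have hnn1 : 0 ≤ p x ^ ((u + v)/2) * p y ^ (1 - (u + v)/2) :=
        mul_nonneg (Real.rpow_nonneg (hp0 x) _) (Real.rpow_nonneg (hp0 y) _)
      have hnn2 : 0 ≤ p (((u + v)/2) * x + (1 - (u + v)/2) * y) := hp0 _
      nlinarith [hchain, hnn1, hnn2]
    intro u hu
    exact (midpoint_dense h0U h1U hUclosed hUmid hu).2
  -- general case
  intro x y u hu
  rcases eq_or_lt_of_le hu.1 with h0 | h0pos
  · rw [← h0, Real.rpow_zero, sub_zero, Real.rpow_one]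
    norm_num
  rcases eq_or_lt_of_le hu.2 with h1 | h1lt
  · rw [h1, Real.rpow_one, sub_self, Real.rpow_zero]
    norm_num
  -- now 0 < u < 1
  rcases eq_or_lt_of_le (hp0 x) with hpx0 | hpx
  · rw [← hpx0, Real.zero_rpow (ne_of_gt h0pos), zero_mul]
    exact hp0 _
  rcases eq_or_lt_of_le (hp0 y) with hpy0 | hpy
  · rw [← hpy0, Real.zero_rpow (show (1:ℝ) - u ≠ 0 from ne_of_gt (by linarith)), mul_zero]
    exact hp0 _
  rcases lt_trichotomy x y with hxy | hxy | hxy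
  · exact main x y hxy hpx hpy u hu
  · rw [hxy]
    have : u * y + (1 - u) * y = y := by ring
    rw [this, ← Real.rpow_add hpy]
    rw [show u + (1 - u) = 1 by ring, Real.rpow_one]
  · have := main y x hxy hpy hpx (1 - u) ⟨by linarith, by linarith⟩
    rw [sub_sub_cancel] at this
    have harg : (1 - u) * y + u * x = u * x + (1 - u) * y := by ring
    rw [harg] at this
    linarith [mul_comm (p y ^ (1 - u)) (p x ^ u), this]
end Aux

/-- For `P` with density `p`, CDF `F` and `ξ ∼ P`, the identity
`T(ξ, t + ξ)(α) = F(F⁻¹(1-α) - t)` holds for every `t > 0` if and only if `p` is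
log-concave (expressed in the multiplicative form
`p(ux + (1-u)y) ≥ p(x)^u p(y)^{1-u}`). -/
theorem statement17 (p : ℝ → ℝ) (hp0 : ∀ x, 0 ≤ p x) (hpm : Measurable p)
    (hpc : Continuous p) (hP : IsProbabilityMeasure (densMeasure p)) :
    (∀ t : ℝ, 0 < t → ∀ α ∈ Ioo (0:ℝ) 1,
        tradeoff (densMeasure p) ((densMeasure p).map (fun x => x + t)) α =
          cdf (densMeasure p) (quantile (densMeasure p) (1 - α) - t)) ↔
      (∀ x y : ℝ, ∀ u ∈ Icc (0:ℝ) 1,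
        p x ^ u * p y ^ (1 - u) ≤ p (u * x + (1 - u) * y)) := by
  constructor
  · intro hform
    exact logconcave_of_form hp0 hpm hpc hP hform
  · intro hlc t ht α hα
    exact tradeoff_eq_of_logConcave hp0 hpm hpc hP hlc ht hα
end
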